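/- arXiv:2311.11414 — 8 statements merged into one kernel-verified Lean document; each statement's English description precedes it below -/
import Mathlib

section
/- Let K be a compact Hausdorff space and ι an infinite type. Assume U : ι → Set K is a family of pairwise disjoint nonempty clopen subsets of K. Then there exists a linear isometry T : c₀(ι) →ₗᵢ C(K, ℝ) such that for every g ∈ c₀(ι) with g ≠ 0, the range Set.range (T g) is a countable and infinite subset of ℝ. (In other words, the set of f ∈ C(K, ℝ) whose range has cardinality exactly ℵ₀, together with 0, contains an isometric copy of c₀(ι).) -/
open scoped ZeroAtInfty

open Filter Topology Set

namespace Stmt0Aux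

variable {K : Type*} [TopologicalSpace K] [CompactSpace K] [T2Space K]
  {ι : Type*} [TopologicalSpace ι] [DiscreteTopology ι]

/-- coefficient function -/
noncomputable def coeff (ψ : ι ≃ ι × ℕ) (g : C₀(ι, ℝ)) (β : ι) : ℝ :=
  (2 : ℝ)⁻¹ ^ (ψ β).2 * g (ψ β).1

lemma abs_g_le (g : C₀(ι, ℝ)) (α : ι) : |g α| ≤ ‖g‖ := by
  have := g.toBCF.norm_coe_le_norm α
  rwa [ZeroAtInftyContinuousMap.norm_toBCF_eq_norm] at this

lemma abs_coeff_le (ψ : ι ≃ ι × ℕ) (g : C₀(ι, ℝ)) (β : ι) :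
    |coeff ψ g β| ≤ |g (ψ β).1| := by
  rw [coeff, abs_mul, abs_pow]
  calc |(2:ℝ)⁻¹| ^ (ψ β).2 * |g (ψ β).1| ≤ 1 * |g (ψ β).1| := by
        apply mul_le_mul_of_nonneg_right _ (abs_nonneg _)
        apply pow_le_one₀ (abs_nonneg _)
        rw [abs_of_nonneg]; norm_num; norm_num
    _ = |g (ψ β).1| := one_mul _

lemma g_finite (g : C₀(ι, ℝ)) {ε : ℝ} (hε : 0 < ε) : {α : ι | ε ≤ |g α|}.Finite := by
  have h := g.zero_at_infty'
  rw [Filter.cocompact_eq_cofinite, Metric.tendsto_nhds] at h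
  have h2 := h ε hε
  rw [Filter.eventually_cofinite] at h2
  refine h2.subset fun α hα => ?_
  simp only [Set.mem_setOf_eq, Real.dist_eq, sub_zero, not_lt] at *
  exact hα

lemma coeff_finite (ψ : ι ≃ ι × ℕ) (g : C₀(ι, ℝ)) {ε : ℝ} (hε : 0 < ε) :
    {β : ι | ε ≤ |coeff ψ g β|}.Finite := by
  have hM : (0:ℝ) < ‖g‖ + 1 := by positivity
  have hkfin : {k : ℕ | ε / (‖g‖ + 1) ≤ (2:ℝ)⁻¹ ^ k}.Finite := by
    have htend : Filter.Tendsto (fun k : ℕ => (2:ℝ)⁻¹ ^ k) Filter.atTop (𝓝 0) :=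
      tendsto_pow_atTop_nhds_zero_of_lt_one (by norm_num) (by norm_num)
    rw [Metric.tendsto_nhds] at htend
    have h2 := htend (ε / (‖g‖ + 1)) (by positivity)
    rw [← Nat.cofinite_eq_atTop, Filter.eventually_cofinite] at h2
    refine h2.subset fun k hk => ?_
    simp only [Set.mem_setOf_eq, Real.dist_eq, sub_zero, not_lt] at *
    calc ε / (‖g‖ + 1) ≤ (2:ℝ)⁻¹ ^ k := hk
      _ ≤ |(2:ℝ)⁻¹ ^ k| := le_abs_self _
  have hfin : ({α : ι | ε ≤ |g α|} ×ˢ {k : ℕ | ε / (‖g‖ + 1) ≤ (2:ℝ)⁻¹ ^ k}).Finite :=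
    (g_finite g hε).prod hkfin
  have : {β : ι | ε ≤ |coeff ψ g β|} ⊆ ψ ⁻¹' ({α : ι | ε ≤ |g α|} ×ˢ {k : ℕ | ε / (‖g‖ + 1) ≤ (2:ℝ)⁻¹ ^ k}) := by
    intro β hβ
    simp only [Set.mem_setOf_eq] at hβ
    have hpow_pos : (0:ℝ) < (2:ℝ)⁻¹ ^ (ψ β).2 := by positivity
    constructor
    · exact le_trans hβ (abs_coeff_le ψ g β)
    · show ε / (‖g‖ + 1) ≤ (2:ℝ)⁻¹ ^ (ψ β).2
      rw [div_le_iff₀ hM]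
      calc ε ≤ |coeff ψ g β| := hβ
        _ = (2:ℝ)⁻¹ ^ (ψ β).2 * |g (ψ β).1| := by
            rw [coeff, abs_mul, abs_pow, abs_of_nonneg]; norm_num
        _ ≤ (2:ℝ)⁻¹ ^ (ψ β).2 * (‖g‖ + 1) := by
            apply mul_le_mul_of_nonneg_left _ (le_of_lt hpow_pos)
            exact le_trans (abs_g_le g _) (by linarith)
  exact (hfin.preimage (ψ.injective.injOn)).subset this

/-- the underlying function of `T g` -/
noncomputable def Tfun (U : ι → Set K) (ψ : ι ≃ ι × ℕ) (g : C₀(ι, ℝ)) (x : K) : ℝ :=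
  open Classical in
  if h : ∃ β, x ∈ U β then coeff ψ g h.choose else 0

lemma Tfun_eq (U : ι → Set K) (hdisj : ∀ α β, α ≠ β → Disjoint (U α) (U β)) (ψ : ι ≃ ι × ℕ)
    (g : C₀(ι, ℝ)) {x : K} {β : ι} (hx : x ∈ U β) : Tfun U ψ g x = coeff ψ g β := by
  have h : ∃ γ, x ∈ U γ := ⟨β, hx⟩
  rw [Tfun, dif_pos h]
  congr 1
  by_contra hne
  exact (hdisj _ _ hne).ne_of_mem h.choose_spec hx rfl

lemma Tfun_continuous (U : ι → Set K) (hclopen : ∀ α, IsClopen (U α))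
    (hdisj : ∀ α β, α ≠ β → Disjoint (U α) (U β)) (ψ : ι ≃ ι × ℕ) (g : C₀(ι, ℝ)) :
    Continuous (Tfun U ψ g) := by
  rw [continuous_iff_continuousAt]
  intro x
  by_cases hx : ∃ β, x ∈ U β
  · obtain ⟨β, hβ⟩ := hx
    have : Tfun U ψ g =ᶠ[𝓝 x] fun _ => coeff ψ g β := by
      filter_upwards [(hclopen β).2.mem_nhds hβ] with y hy
      exact Tfun_eq U hdisj ψ g hy
    exact ContinuousAt.congr continuousAt_const this.symm
  · have hx0 : Tfun U ψ g x = 0 := dif_neg hx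
    rw [ContinuousAt, hx0, Metric.tendsto_nhds]
    intro ε hε
    have hfin := coeff_finite ψ g hε
    set F := hfin.toFinset with hF
    have hVopen : IsOpen ((⋃ β ∈ F, U β)ᶜ) := by
      apply isOpen_compl_iff.mpr
      exact Set.Finite.isClosed_biUnion F.finite_toSet (fun β _ => (hclopen β).1)
    have hxV : x ∈ (⋃ β ∈ F, U β)ᶜ := by
      simp only [Set.mem_compl_iff, Set.mem_iUnion, not_exists]
      intro β _ hmem
      exact hx ⟨β, hmem⟩
    filter_upwards [hVopen.mem_nhds hxV] with y hy
    rw [Real.dist_eq, sub_zero]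
    by_cases hy2 : ∃ β, y ∈ U β
    · obtain ⟨β, hβ⟩ := hy2
      rw [Tfun_eq U hdisj ψ g hβ]
      by_contra hcon
      push_neg at hcon
      have hβF : β ∈ F := by
        rw [hF, Set.Finite.mem_toFinset]
        exact hcon
      exact hy (Set.mem_biUnion hβF hβ)
    · rw [Tfun, dif_neg hy2]
      simpa using hε

end Stmt0Aux

/-- If `K` is a compact Hausdorff space and `U : ι → Set K` is a family of
pairwise disjoint nonempty clopen subsets of `K` indexed by an infinite type `ι`, then there is
a linear isometry `T : c₀(ι) →ₗᵢ C(K, ℝ)` such that the range of `T g` is countably infinite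
for every `g ≠ 0`. -/
theorem stmt0 {K : Type*} [TopologicalSpace K] [CompactSpace K] [T2Space K]
    {ι : Type*} [TopologicalSpace ι] [DiscreteTopology ι] [Infinite ι]
    (U : ι → Set K) (hne : ∀ α, (U α).Nonempty) (hclopen : ∀ α, IsClopen (U α))
    (hdisj : ∀ α β, α ≠ β → Disjoint (U α) (U β)) :
    ∃ T : C₀(ι, ℝ) →ₗᵢ[ℝ] C(K, ℝ),
      ∀ g : C₀(ι, ℝ), g ≠ 0 →
        (Set.range (T g)).Countable ∧ (Set.range (T g)).Infinite := by
  classical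
  -- an equivalence ι ≃ ι × ℕ
  have hcard : Nonempty (ι ≃ ι × ℕ) := by
    rw [← Cardinal.eq]
    have : Cardinal.mk (ι × ℕ) = Cardinal.mk ι := by
      simp only [Cardinal.mk_prod, Cardinal.mk_eq_aleph0, Cardinal.lift_id', Cardinal.lift_aleph0]
      exact Cardinal.mul_aleph0_eq (Cardinal.aleph0_le_mk ι)
    exact this.symm
  obtain ⟨ψ⟩ := hcard
  -- the continuous map associated to `g`
  let Tcm : C₀(ι, ℝ) → C(K, ℝ) := fun g =>
    ⟨Stmt0Aux.Tfun U ψ g, Stmt0Aux.Tfun_continuous U hclopen hdisj ψ g⟩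
  have hTval : ∀ (g : C₀(ι, ℝ)) {x : K} {β : ι}, x ∈ U β →
      Tcm g x = Stmt0Aux.coeff ψ g β := by
    intro g x β hx
    exact Stmt0Aux.Tfun_eq U hdisj ψ g hx
  have hTval0 : ∀ (g : C₀(ι, ℝ)) {x : K}, (¬ ∃ β, x ∈ U β) → Tcm g x = 0 := by
    intro g x hx
    show Stmt0Aux.Tfun U ψ g x = 0
    rw [Stmt0Aux.Tfun, dif_neg hx]
  -- key: every value |g α| is attained
  have hattain : ∀ (g : C₀(ι, ℝ)) (α : ι) (k : ℕ), ∃ x : K,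
      Tcm g x = (2:ℝ)⁻¹ ^ k * g α := by
    intro g α k
    obtain ⟨x, hx⟩ := hne (ψ.symm (α, k))
    refine ⟨x, ?_⟩
    rw [hTval g hx, Stmt0Aux.coeff, Equiv.apply_symm_apply]
  -- norm equality
  have hnorm : ∀ g : C₀(ι, ℝ), ‖Tcm g‖ = ‖g‖ := by
    intro g
    apply le_antisymm
    · rw [ContinuousMap.norm_le _ (norm_nonneg g)]
      intro x
      by_cases hx : ∃ β, x ∈ U β
      · obtain ⟨β, hβ⟩ := hx
        rw [hTval g hβ]
        exact le_trans (Stmt0Aux.abs_coeff_le ψ g β) (Stmt0Aux.abs_g_le g _)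
      · rw [hTval0 g hx]
        simpa using norm_nonneg g
    · rw [← ZeroAtInftyContinuousMap.norm_toBCF_eq_norm,
        BoundedContinuousFunction.norm_le (norm_nonneg _)]
      intro α
      obtain ⟨x, hx⟩ := hattain g α 0
      have : g α = Tcm g x := by rw [hx]; ring
      calc ‖g.toBCF α‖ = ‖Tcm g x‖ := by rw [show g.toBCF α = g α from rfl, this]
        _ ≤ ‖Tcm g‖ := (Tcm g).norm_coe_le_norm x
  -- linearity
  refine ⟨⟨⟨⟨Tcm, ?_⟩, ?_⟩, hnorm⟩, ?_⟩
  · -- additivity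
    intro g g'
    ext x
    by_cases hx : ∃ β, x ∈ U β
    · obtain ⟨β, hβ⟩ := hx
      show Tcm (g + g') x = Tcm g x + Tcm g' x
      rw [hTval _ hβ, hTval _ hβ, hTval _ hβ]
      simp only [Stmt0Aux.coeff, ZeroAtInftyContinuousMap.coe_add, Pi.add_apply]
      ring
    · show Tcm (g + g') x = Tcm g x + Tcm g' x
      rw [hTval0 _ hx, hTval0 _ hx, hTval0 _ hx]; ring
  · -- smul
    intro c g
    ext x
    by_cases hx : ∃ β, x ∈ U β
    · obtain ⟨β, hβ⟩ := hx
      show Tcm (c • g) x = c • Tcm g x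
      rw [hTval _ hβ, hTval _ hβ]
      simp only [Stmt0Aux.coeff, ZeroAtInftyContinuousMap.coe_smul, Pi.smul_apply,
        smul_eq_mul]
      ring
    · show Tcm (c • g) x = c • Tcm g x
      rw [hTval0 _ hx, hTval0 _ hx]; simp
  · -- range properties
    intro g hg
    have hrange_g : (Set.range g).Countable := by
      have hsub : Set.range g ⊆ insert 0 (g '' ⋃ n : ℕ, {α : ι | 1/(n+1) ≤ |g α|}) := by
        rintro - ⟨α, rfl⟩
        by_cases h0 : g α = 0
        · exact h0 ▸ Set.mem_insert _ _
        · refine Set.mem_insert_of_mem _ ⟨α, ?_, rfl⟩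
          obtain ⟨n, hn⟩ := exists_nat_one_div_lt (abs_pos.mpr h0)
          exact Set.mem_iUnion.mpr ⟨n, le_of_lt hn⟩
      refine (Set.Countable.insert 0 ?_).mono hsub
      refine Set.Countable.image ?_ g
      exact Set.countable_iUnion fun n =>
        (Stmt0Aux.g_finite g (by positivity : (0:ℝ) < 1/(n+1))).countable
    constructor
    · -- countable
      have hsub : Set.range (Tcm g) ⊆
          insert 0 (⋃ k : ℕ, (fun a => (2:ℝ)⁻¹ ^ k * a) '' Set.range g) := by
        rintro - ⟨x, rfl⟩
        by_cases hx : ∃ β, x ∈ U β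
        · obtain ⟨β, hβ⟩ := hx
          rw [hTval g hβ]
          exact Set.mem_insert_of_mem _
            (Set.mem_iUnion.mpr ⟨(ψ β).2, ⟨g (ψ β).1, ⟨(ψ β).1, rfl⟩, rfl⟩⟩)
        · rw [hTval0 g hx]; exact Set.mem_insert _ _
      refine (Set.Countable.insert 0 ?_).mono hsub
      exact Set.countable_iUnion fun k => hrange_g.image _
    · -- infinite
      have hα : ∃ α, g α ≠ 0 := by
        by_contra hcon
        push_neg at hcon
        exact hg (ZeroAtInftyContinuousMap.ext fun α => hcon α)
      obtain ⟨α₀, hα₀⟩ := hα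
      apply Set.infinite_of_injective_forall_mem
        (f := fun k : ℕ => (2:ℝ)⁻¹ ^ k * g α₀)
      · intro k l hkl
        have hanti : StrictAnti (fun k : ℕ => (2:ℝ)⁻¹ ^ k) := fun m n h =>
          pow_lt_pow_right_of_lt_one₀ (by norm_num) (by norm_num) h
        have h2 : (2:ℝ)⁻¹ ^ k = (2:ℝ)⁻¹ ^ l := mul_right_cancel₀ hα₀ hkl
        exact hanti.injective h2
      · intro k
        obtain ⟨x, hx⟩ := hattain g α₀ k
        exact ⟨x, hx⟩
end

section
/- Let K be a nonempty compact Hausdorff space which admits a Cantor scheme of clopen subsets of K (with A [] = Set.univ). Then for every nonempty compact set L ⊆ ℝ there exists a continuous function f ∈ C(K, ℝ) with Set.range f = L. -/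
/-- A Cantor scheme of clopen subsets of `X ⊆ K`: a family of nonempty clopen subsets of `K`
indexed by finite 0-1 sequences, with `A [] = X`, decreasing along extensions, and with the two
immediate successors of each node disjoint. -/
def IsClopenCantorScheme {K : Type*} [TopologicalSpace K] (X : Set K)
    (A : List Bool → Set K) : Prop :=
  A [] = X ∧ (∀ s, (A s).Nonempty) ∧ (∀ s, IsClopen (A s)) ∧
    (∀ (s : List Bool) (i : Bool), A (s ++ [i]) ⊆ A s) ∧
    ∀ s : List Bool, A (s ++ [false]) ∩ A (s ++ [true]) = ∅

/-!
Reading off, at each level of the scheme, whether a point lies in the `true` successor of the node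
reached so far gives a continuous map `K → (ℕ → Bool)`. It is onto: by compactness every branch
of the scheme has a point in common, and since siblings are disjoint such a point reads off
exactly that branch. Composing with a continuous surjection of the Cantor space onto `L`
(Hausdorff–Alexandroff) gives `f`.
-/

open Topology

theorem IsLocallyConstant.decide_mem {K ι : Type*} [TopologicalSpace K] {g : K → ι}
    (hg : IsLocallyConstant g) {A : ι → Set K} (hA : ∀ i, IsClopen (A i))
    [∀ i x, Decidable (x ∈ A i)] : IsLocallyConstant fun x => decide (x ∈ A (g x)) := by
  rw [IsLocallyConstant.iff_eventually_eq] at hg ⊢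
  intro x
  have hmem : ∀ᶠ y in 𝓝 x, (y ∈ A (g x) ↔ x ∈ A (g x)) := by
    by_cases hx : x ∈ A (g x)
    · filter_upwards [(hA _).isOpen.mem_nhds hx] with y hy using iff_of_true hy hx
    · filter_upwards [(hA _).compl.isOpen.mem_nhds hx] with y hy using iff_of_false hy hx
  filter_upwards [hg x, hmem] with y hgy hy
  simpa only [hgy, decide_eq_decide] using hy

namespace IsClopenCantorScheme

variable {K : Type*} {A : List Bool → Set K}

open scoped Classical in
/-- The digit `false` only records that `x` is not in the `true` successor: `x` need not lie in
any node of the scheme below the root. -/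
noncomputable def address (A : List Bool → Set K) (x : K) : ℕ → List Bool
  | 0 => []
  | n + 1 => address A x n ++ [decide (x ∈ A (address A x n ++ [true]))]

open scoped Classical in
noncomputable def code (A : List Bool → Set K) (x : K) (n : ℕ) : Bool :=
  decide (x ∈ A (address A x n ++ [true]))

theorem address_succ (x : K) (n : ℕ) :
    address A x (n + 1) = address A x n ++ [code A x n] :=
  rfl

theorem code_eq_of_mem (hdisj : ∀ s, A (s ++ [false]) ∩ A (s ++ [true]) = ∅) {x : K} {n : ℕ}
    {s : List Bool} {i : Bool} (hs : address A x n = s) (hx : x ∈ A (s ++ [i])) :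
    code A x n = i := by
  classical
  unfold code
  rw [hs]
  cases i
  · exact decide_eq_false fun hxt => (hdisj s).subset ⟨hx, hxt⟩
  · exact decide_eq_true hx

theorem address_eq_of_forall_mem (hdisj : ∀ s, A (s ++ [false]) ∩ A (s ++ [true]) = ∅)
    {b : ℕ → Bool} {x : K} (hx : ∀ n, x ∈ A ((List.range n).map b)) (n : ℕ) :
    address A x n = (List.range n).map b := by
  induction n with
  | zero => rfl
  | succ n ih =>
    have hxn : x ∈ A ((List.range n).map b ++ [b n]) := by
      simpa only [List.range_succ, List.map_append, List.map_singleton] using hx (n + 1)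
    rw [address_succ, code_eq_of_mem hdisj ih hxn, List.range_succ, List.map_append,
      List.map_singleton, ih]

variable [TopologicalSpace K]

theorem isLocallyConstant_address (hA : ∀ s, IsClopen (A s)) (n : ℕ) :
    IsLocallyConstant fun x => address A x n := by
  induction n with
  | zero => exact IsLocallyConstant.const _
  | succ n ih =>
    classical
    exact ih.comp₂ (ih.decide_mem fun s => hA (s ++ [true])) fun s b => s ++ [b]

theorem continuous_code (hA : ∀ s, IsClopen (A s)) : Continuous (code A) := by
  classical
  exact continuous_pi fun n =>
    ((isLocallyConstant_address hA n).decide_mem fun s => hA (s ++ [true])).continuous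

theorem nonempty_iInter_branch [CompactSpace K] {X : Set K} (hA : IsClopenCantorScheme X A)
    (b : ℕ → Bool) : (⋂ n, A ((List.range n).map b)).Nonempty := by
  obtain ⟨-, hne, hclopen, hsub, -⟩ := hA
  refine IsCompact.nonempty_iInter_of_sequence_nonempty_isCompact_isClosed _ (fun n => ?_)
    (fun _ => hne _) (hclopen _).isClosed.isCompact (fun _ => (hclopen _).isClosed)
  simpa only [List.range_succ, List.map_append, List.map_singleton] using hsub _ (b n)

theorem surjective_code [CompactSpace K] {X : Set K} (hA : IsClopenCantorScheme X A) :
    Function.Surjective (code A) := by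
  intro b
  obtain ⟨x, hx⟩ := nonempty_iInter_branch hA b
  have hmem : ∀ n, x ∈ A ((List.range n).map b) := Set.mem_iInter.mp hx
  refine ⟨x, funext fun n =>
    code_eq_of_mem hA.2.2.2.2 (address_eq_of_forall_mem hA.2.2.2.2 hmem n) ?_⟩
  simpa only [List.range_succ, List.map_append, List.map_singleton] using hmem (n + 1)

end IsClopenCantorScheme

open IsClopenCantorScheme in
theorem stmt1_general {K : Type*} [TopologicalSpace K] [CompactSpace K]
    (A : List Bool → Set K) (hA : IsClopenCantorScheme Set.univ A)
    (L : Set ℝ) (hL : IsCompact L) (hLne : L.Nonempty) :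
    ∃ f : C(K, ℝ), Set.range f = L := by
  have : CompactSpace L := isCompact_iff_compactSpace.mp hL
  have : Nonempty L := hLne.to_subtype
  obtain ⟨g, hg, hgs⟩ := exists_nat_bool_continuous_surjective_of_compact L
  refine ⟨⟨Subtype.val ∘ g ∘ code A,
    continuous_subtype_val.comp (hg.comp (continuous_code hA.2.2.1))⟩, ?_⟩
  rw [ContinuousMap.coe_mk, Set.range_comp, (hgs.comp (surjective_code hA)).range_eq,
    Set.image_univ, Subtype.range_coe]

/-- If a nonempty compact Hausdorff space `K` admits a Cantor scheme of clopen
subsets (with `A [] = univ`), then every nonempty compact `L ⊆ ℝ` is the range of some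
continuous `f : K → ℝ`. -/
theorem stmt1 {K : Type*} [TopologicalSpace K] [CompactSpace K] [T2Space K] [Nonempty K]
    (A : List Bool → Set K) (hA : IsClopenCantorScheme Set.univ A)
    (L : Set ℝ) (hL : IsCompact L) (hLne : L.Nonempty) :
    ∃ f : C(K, ℝ), Set.range f = L :=
  stmt1_general A hA L hL hLne
end

section
/- Let K be a compact Hausdorff space, ι an uncountable type, and U : ι → Set K a family of pairwise disjoint nonempty clopen subsets of K such that each U α admits a Cantor scheme of clopen subsets of K with A [] = U α. Then there exists a linear isometry T : c₀(ι) →ₗᵢ C(K, ℝ) such that for every g ≠ 0 the range of T g has cardinality continuum: Cardinal.mk ↥(Set.range (T g)) = Cardinal.continuum. -/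
open scoped ZeroAtInfty

/-!
Each Cantor scheme on `U α` yields a continuous code `K → (ℕ → Bool)`, recording at every level
whether a point lies in a right child. It vanishes off `U α` and, by compactness, maps `U α`
onto the Cantor space. Composed with the injective Cantor function `f ↦ (2/3) ∑ₙ fₙ 3⁻ⁿ`, it
gives `φ α : K → [0, 1]` supported in `U α`, attaining `1` and taking continuum many values.
As the `φ α` have disjoint supports, `g ↦ ∑' α, g α • φ α` converges in `C(K, ℝ)` for
`g ∈ c₀(ι)` and is an isometry; on `U α` it equals `g α • φ α`, so its range has continuum many
points as soon as `g α ≠ 0`.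
-/

open Cardinal Function

def branchPrefix (b : ℕ → Bool) (n : ℕ) : List Bool := List.ofFn fun i : Fin n => b i

lemma branchPrefix_succ (b : ℕ → Bool) (n : ℕ) :
    branchPrefix b (n + 1) = branchPrefix b n ++ [b n] := by
  rw [branchPrefix, List.ofFn_succ']
  simp [branchPrefix]

namespace IsClopenCantorScheme

variable {K : Type*} [TopologicalSpace K] {X : Set K} {A : List Bool → Set K}

lemma append_subset (hA : IsClopenCantorScheme X A) (s u : List Bool) : A (s ++ u) ⊆ A s := by
  induction u using List.reverseRecOn with
  | nil => simp
  | append_singleton u i ih => exact (List.append_assoc s u [i] ▸ hA.2.2.2.1 (s ++ u) i).trans ih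

lemma subset_root (hA : IsClopenCantorScheme X A) (s : List Bool) : A s ⊆ X :=
  hA.1 ▸ hA.append_subset [] s

lemma disjoint_append_singleton (hA : IsClopenCantorScheme X A) (s : List Bool) {i j : Bool}
    (hij : i ≠ j) : Disjoint (A (s ++ [i])) (A (s ++ [j])) := by
  have h := Set.disjoint_iff_inter_eq_empty.2 (hA.2.2.2.2 s)
  cases i <;> cases j <;> first | exact absurd rfl hij | exact h | exact h.symm

lemma disjoint_of_length_eq (hA : IsClopenCantorScheme X A) {s t : List Bool}
    (hlen : s.length = t.length) (hst : s ≠ t) : Disjoint (A s) (A t) := by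
  induction s using List.reverseRecOn generalizing t with
  | nil => exact absurd (List.length_eq_zero_iff.1 hlen.symm).symm hst
  | append_singleton s i ih =>
    obtain rfl | ⟨t, j, rfl⟩ := t.eq_nil_or_concat'
    · simp at hlen
    simp only [List.length_append, List.length_singleton, add_left_inj] at hlen
    by_cases hst' : s = t
    · subst hst'
      exact hA.disjoint_append_singleton s fun hij => hst (hij ▸ rfl)
    · exact (ih hlen hst').mono (hA.append_subset s [i]) (hA.append_subset t [j])

lemma exists_forall_mem_branchPrefix [CompactSpace K] (hA : IsClopenCantorScheme X A)
    (b : ℕ → Bool) : ∃ x, ∀ n, x ∈ A (branchPrefix b n) := by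
  obtain ⟨x, hx⟩ := IsCompact.nonempty_iInter_of_sequence_nonempty_isCompact_isClosed
    (fun n => A (branchPrefix b n))
    (fun n => branchPrefix_succ b n ▸ hA.2.2.2.1 _ _) (fun _ => hA.2.1 _)
    (hA.2.2.1 _).isClosed.isCompact (fun _ => (hA.2.2.1 _).isClosed)
  exact ⟨x, Set.mem_iInter.1 hx⟩

end IsClopenCantorScheme

section CantorCode

variable {K : Type*} [TopologicalSpace K] {X : Set K} {A : List Bool → Set K}

def cantorLevel (A : List Bool → Set K) (n : ℕ) : Set K :=
  ⋃ v : Fin n → Bool, A (List.ofFn v ++ [true])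

noncomputable def cantorCode (A : List Bool → Set K) (x : K) (n : ℕ) : Bool :=
  (cantorLevel A n).boolIndicator x

lemma continuous_cantorCode (hA : IsClopenCantorScheme X A) : Continuous (cantorCode A) :=
  continuous_pi fun _ => (continuous_boolIndicator_iff_isClopen _).2 <|
    isClopen_iUnion_of_finite fun _ => hA.2.2.1 _

lemma cantorCode_of_notMem (hA : IsClopenCantorScheme X A) {x : K} (hx : x ∉ X) :
    cantorCode A x = fun _ => false := by
  funext n
  refine (Set.notMem_iff_boolIndicator _ x).1 fun hxn => hx ?_
  obtain ⟨v, hv⟩ := Set.mem_iUnion.1 hxn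
  exact hA.subset_root _ hv

lemma cantorCode_eq_of_forall_mem (hA : IsClopenCantorScheme X A) {b : ℕ → Bool} {x : K}
    (hx : ∀ n, x ∈ A (branchPrefix b n)) : cantorCode A x = b := by
  funext n
  have hxn : x ∈ A (branchPrefix b n ++ [b n]) := branchPrefix_succ b n ▸ hx (n + 1)
  cases hbn : b n
  · refine (Set.notMem_iff_boolIndicator _ x).1 fun hxB => ?_
    obtain ⟨v, hv⟩ := Set.mem_iUnion.1 hxB
    refine Set.disjoint_left.1 (hA.disjoint_of_length_eq ?_ ?_) hv (hbn ▸ hxn)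
    · simp [branchPrefix]
    · intro h
      simpa [hbn] using (List.append_inj h (by simp [branchPrefix])).2
  · exact (Set.mem_iff_boolIndicator _ x).1 <| Set.mem_iUnion.2 ⟨fun i => b i, hbn ▸ hxn⟩

lemma exists_mem_cantorCode_eq [CompactSpace K] (hA : IsClopenCantorScheme X A) (b : ℕ → Bool) :
    ∃ x ∈ X, cantorCode A x = b := by
  obtain ⟨x, hx⟩ := hA.exists_forall_mem_branchPrefix b
  exact ⟨x, hA.1 ▸ hx 0, cantorCode_eq_of_forall_mem hA hx⟩

end CantorCode

namespace Cardinal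

variable {c : ℝ}

lemma continuous_cantorFunction (h0 : 0 ≤ c) (h1 : c < 1) : Continuous (cantorFunction c) :=
  continuous_tsum
    (fun n => (continuous_of_discreteTopology (f := fun i : Bool => cond i (c ^ n) 0)).comp
      (continuous_apply n))
    (summable_geometric_of_lt_one h0 h1) fun n f => by
      cases h : f n <;> simp [h, abs_of_nonneg h0, pow_nonneg h0]

lemma cantorFunction_false : cantorFunction c (fun _ => false) = 0 := by
  simp [cantorFunction, cantorFunctionAux]

lemma cantorFunction_true (h0 : 0 ≤ c) (h1 : c < 1) :
    cantorFunction c (fun _ => true) = (1 - c)⁻¹ := by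
  simp [cantorFunction, cantorFunctionAux, tsum_geometric_of_lt_one h0 h1]

lemma cantorFunction_mem_Icc (h0 : 0 ≤ c) (h1 : c < 1) (f : ℕ → Bool) :
    cantorFunction c f ∈ Set.Icc 0 (1 - c)⁻¹ :=
  ⟨cantorFunction_false (c := c) ▸ cantorFunction_le h0 h1 (by simp),
    cantorFunction_true h0 h1 ▸ cantorFunction_le h0 h1 (by simp)⟩

end Cardinal

lemma IsClopenCantorScheme.exists_bump {K : Type*} [TopologicalSpace K] [CompactSpace K]
    {X : Set K} {A : List Bool → Set K} (hA : IsClopenCantorScheme X A) :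
    ∃ φ : C(K, ℝ), ‖φ‖ ≤ 1 ∧ support φ ⊆ X ∧ (∃ x, φ x = 1) ∧ 𝔠 ≤ #(φ '' X) := by
  have h3 : (0 : ℝ) ≤ 3⁻¹ ∧ (3 : ℝ)⁻¹ < 1 := by norm_num
  let F : C(ℕ → Bool, ℝ) := ⟨fun f => 2 / 3 * cantorFunction 3⁻¹ f,
    continuous_const.mul (continuous_cantorFunction h3.1 h3.2)⟩
  choose x hxX hx using exists_mem_cantorCode_eq hA
  refine ⟨F.comp ⟨cantorCode A, continuous_cantorCode hA⟩, ?_, ?_, ⟨x fun _ => true, ?_⟩, ?_⟩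
  · refine (ContinuousMap.norm_le _ zero_le_one).2 fun y => ?_
    obtain ⟨h0, h1⟩ := cantorFunction_mem_Icc h3.1 h3.2 (cantorCode A y)
    norm_num at h1
    simp only [ContinuousMap.comp_apply, ContinuousMap.coe_mk, F, Real.norm_eq_abs]
    rw [abs_le]
    constructor <;> linarith
  · intro y hy
    by_contra hyX
    simp [F, cantorCode_of_notMem hA hyX, cantorFunction_false] at hy
  · simp only [ContinuousMap.comp_apply, ContinuousMap.coe_mk, F, hx,
      cantorFunction_true h3.1 h3.2]
    norm_num
  · have hinj : Injective F := (mul_right_injective₀ (by norm_num)).comp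
      (cantorFunction_injective (by norm_num) (by norm_num))
    calc 𝔠 = #(ℕ → Bool) := by simp
      _ ≤ #(_ '' X) := mk_le_of_injective (f := fun b => ⟨F b, x b, hxX b, by simp [hx]⟩)
          fun b b' h => hinj (congrArg Subtype.val h)

lemma ZeroAtInftyContinuousMap.finite_setOf_le_norm {ι E : Type*} [TopologicalSpace ι]
    [DiscreteTopology ι] [NormedAddCommGroup E] (g : C₀(ι, E)) {ε : ℝ} (hε : 0 < ε) :
    {α | ε ≤ ‖g α‖}.Finite := by
  have hg : Filter.Tendsto g Filter.cofinite (nhds 0) :=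
    Filter.cocompact_eq_cofinite ι ▸ g.zero_at_infty'
  simpa using Filter.eventually_cofinite.1
    (hg.norm.eventually (gt_mem_nhds (norm_zero (E := E) ▸ hε)))

section DisjointSupports

variable {ι K : Type*} [TopologicalSpace K] {φ : ι → C(K, ℝ)}

lemma eq_zero_of_disjoint_support (hdisj : Pairwise (Disjoint on fun α => support (φ α)))
    {α β : ι} {x : K} (hx : φ β x ≠ 0) (hαβ : α ≠ β) : φ α x = 0 :=
  notMem_support.1 fun hα => Set.disjoint_left.1 (hdisj hαβ) hα hx

variable [CompactSpace K]

lemma norm_sum_smul_le_of_disjoint_support (hφ : ∀ α, ‖φ α‖ ≤ 1)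
    (hdisj : Pairwise (Disjoint on fun α => support (φ α))) {c : ι → ℝ} {ε : ℝ} (hε : 0 ≤ ε)
    (t : Finset ι) (hc : ∀ α ∈ t, ‖c α‖ ≤ ε) : ‖∑ α ∈ t, c α • φ α‖ ≤ ε := by
  refine (ContinuousMap.norm_le _ hε).2 fun x => ?_
  rw [ContinuousMap.sum_apply]
  by_cases hx : ∃ β ∈ t, φ β x ≠ 0
  · obtain ⟨β, hβt, hβx⟩ := hx
    rw [Finset.sum_eq_single_of_mem β hβt fun α _ hαβ => by
      simp [eq_zero_of_disjoint_support hdisj hβx hαβ]]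
    calc ‖(c β • φ β) x‖ = ‖c β‖ * ‖φ β x‖ := by simp
      _ ≤ ε * 1 := mul_le_mul (hc β hβt) ((φ β).norm_coe_le_norm x |>.trans (hφ β))
          (norm_nonneg _) hε
      _ = ε := mul_one ε
  · push Not at hx
    rw [Finset.sum_eq_zero fun α hα => by simp [hx α hα], norm_zero]
    exact hε

variable [TopologicalSpace ι] [DiscreteTopology ι]

lemma summable_smul_of_disjoint_support (hφ : ∀ α, ‖φ α‖ ≤ 1)
    (hdisj : Pairwise (Disjoint on fun α => support (φ α))) (g : C₀(ι, ℝ)) :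
    Summable fun α => g α • φ α := by
  refine summable_iff_vanishing_norm.2 fun ε hε => ?_
  obtain ⟨s, hs⟩ : ∃ s : Finset ι, ∀ α ∉ s, ‖g α‖ < ε / 2 :=
    ⟨(g.finite_setOf_le_norm (half_pos hε)).toFinset, fun α hα => by simpa using hα⟩
  refine ⟨s, fun t hts => ?_⟩
  refine (norm_sum_smul_le_of_disjoint_support hφ hdisj (half_pos hε).le t fun α hα =>
    (hs α (Finset.disjoint_left.1 hts hα)).le).trans_lt (half_lt_self hε)

lemma tsum_smul_apply_of_disjoint_support (hφ : ∀ α, ‖φ α‖ ≤ 1)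
    (hdisj : Pairwise (Disjoint on fun α => support (φ α))) (g : C₀(ι, ℝ)) {β : ι} {x : K}
    (hx : ∀ α ≠ β, φ α x = 0) : (∑' α, g α • φ α) x = g β * φ β x := by
  rw [← ContinuousMap.tsum_apply (summable_smul_of_disjoint_support hφ hdisj g)]
  exact (tsum_eq_single β fun α hα => by simp [hx α hα]).trans (by simp)

noncomputable def linearIsometryOfDisjointSupport (hφ : ∀ α, ‖φ α‖ ≤ 1)
    (hdisj : Pairwise (Disjoint on fun α => support (φ α))) (hpeak : ∀ α, ∃ x, φ α x = 1) :
    C₀(ι, ℝ) →ₗᵢ[ℝ] C(K, ℝ) where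
  toFun g := ∑' α, g α • φ α
  map_add' g g' := by
    simp only [ZeroAtInftyContinuousMap.coe_add, Pi.add_apply, add_smul]
    exact (summable_smul_of_disjoint_support hφ hdisj g).tsum_add
      (summable_smul_of_disjoint_support hφ hdisj g')
  map_smul' r g := by
    simp only [ZeroAtInftyContinuousMap.coe_smul, Pi.smul_apply, smul_eq_mul, mul_smul,
      RingHom.id_apply]
    exact (summable_smul_of_disjoint_support hφ hdisj g).tsum_const_smul r
  norm_map' g := by
    refine le_antisymm ?_ ?_
    · exact le_of_tendsto' (summable_smul_of_disjoint_support hφ hdisj g).hasSum.norm fun t =>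
        norm_sum_smul_le_of_disjoint_support hφ hdisj (norm_nonneg g) t fun α _ =>
          g.toBCF.norm_coe_le_norm α |>.trans_eq ZeroAtInftyContinuousMap.norm_toBCF_eq_norm
    · rw [← ZeroAtInftyContinuousMap.norm_toBCF_eq_norm,
        BoundedContinuousFunction.norm_le (norm_nonneg _)]
      intro β
      obtain ⟨x, hx⟩ := hpeak β
      have hval := tsum_smul_apply_of_disjoint_support hφ hdisj g
        (fun α hαβ => eq_zero_of_disjoint_support hdisj (hx ▸ one_ne_zero) hαβ)
      rw [hx, mul_one] at hval
      exact hval ▸ ContinuousMap.norm_coe_le_norm _ x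

end DisjointSupports

theorem stmt3_general {K : Type*} [TopologicalSpace K] [CompactSpace K]
    {ι : Type*} [TopologicalSpace ι] [DiscreteTopology ι]
    (U : ι → Set K)
    (hdisj : ∀ α β, α ≠ β → Disjoint (U α) (U β))
    (hscheme : ∀ α, ∃ A : List Bool → Set K, IsClopenCantorScheme (U α) A) :
    ∃ T : C₀(ι, ℝ) →ₗᵢ[ℝ] C(K, ℝ),
      ∀ g : C₀(ι, ℝ), g ≠ 0 →
        Cardinal.mk ↥(Set.range (T g)) = Cardinal.continuum := by
  choose A hA using hscheme
  choose φ hφ hsupp hpeak hcard using fun α => (hA α).exists_bump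
  have hφdisj : Pairwise (Disjoint on fun α => support (φ α)) :=
    fun α β hαβ => (hdisj α β hαβ).mono (hsupp α) (hsupp β)
  set T := linearIsometryOfDisjointSupport hφ hφdisj hpeak
  refine ⟨T, fun g hg => ?_⟩
  obtain ⟨α, hgα⟩ : ∃ α, g α ≠ 0 := by
    by_contra! h
    exact hg (ZeroAtInftyContinuousMap.ext h)
  have hsub : (g α * ·) '' (φ α '' U α) ⊆ Set.range (T g) := by
    rintro _ ⟨_, ⟨x, hx, rfl⟩, rfl⟩
    refine ⟨x, tsum_smul_apply_of_disjoint_support hφ hφdisj g fun β hβα => ?_⟩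
    exact notMem_support.1 fun hβ => Set.disjoint_left.1 (hdisj β α hβα) (hsupp β hβ) hx
  refine le_antisymm ((mk_set_le _).trans_eq mk_real) ?_
  calc 𝔠 ≤ #(φ α '' U α) := hcard α
    _ = #((g α * ·) '' (φ α '' U α)) := (mk_image_eq (mul_right_injective₀ hgα)).symm
    _ ≤ _ := mk_le_mk_of_subset hsub

/-- Under the hypotheses on `K`, `ι`, `U`, the set of functions in `C(K, ℝ)`
whose range has cardinality continuum contains, up to the zero function, an isometric
copy of `c₀(ι)`. -/
theorem stmt3 {K : Type*} [TopologicalSpace K] [CompactSpace K] [T2Space K]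
    {ι : Type*} [TopologicalSpace ι] [DiscreteTopology ι] [Uncountable ι]
    (U : ι → Set K) (hne : ∀ α, (U α).Nonempty) (hclopen : ∀ α, IsClopen (U α))
    (hdisj : ∀ α β, α ≠ β → Disjoint (U α) (U β))
    (hscheme : ∀ α, ∃ A : List Bool → Set K, IsClopenCantorScheme (U α) A) :
    ∃ T : C₀(ι, ℝ) →ₗᵢ[ℝ] C(K, ℝ),
      ∀ g : C₀(ι, ℝ), g ≠ 0 →
        Cardinal.mk ↥(Set.range (T g)) = Cardinal.continuum :=
  stmt3_general U hdisj hscheme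
end

section
/- Let I be an ideal on ℕ which has the hereditary Baire property. Then there exists a closed ℝ-submodule V of ℓ∞ such that every element of V other than 0 has a set of I-cluster points of cardinality continuum (i.e. ↑V ⊆ {x ∈ ℓ∞ | Cardinal.mk ↥(L_I(x)) = Cardinal.continuum} ∪ {0}), and every subset D ⊆ ↑V that is dense in V has cardinality at least Cardinal.continuum (so V is a closed subspace of density continuum). -/
open scoped ENNReal

/-- `I` is an ideal on `ℕ`: closed under subsets and finite unions, contains singletons,
and does not contain `ℕ` itself. -/
def IsNatIdeal (I : Set (Set ℕ)) : Prop :=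
  (∀ A B : Set ℕ, A ⊆ B → B ∈ I → A ∈ I) ∧
  (∀ A B : Set ℕ, A ∈ I → B ∈ I → A ∪ B ∈ I) ∧
  (∀ n : ℕ, ({n} : Set ℕ) ∈ I) ∧
  (Set.univ : Set ℕ) ∉ I

/-- A set has the Baire property if it differs from an open set by a meagre set. -/
def HasBaireProperty {α : Type*} [TopologicalSpace α] (S : Set α) : Prop :=
  ∃ O : Set α, IsOpen O ∧ IsMeagre (symmDiff S O)

/-- An ideal on `ℕ` has the hereditary Baire property if its restriction to any `X ∉ I`
has the Baire property in the Cantor space `↥X → Bool`. -/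
def IdealHasHereditaryBaireProperty (I : Set (Set ℕ)) : Prop :=
  ∀ X : Set ℕ, X ∉ I →
    HasBaireProperty {χ : ↥X → Bool | {n : ℕ | ∃ h : n ∈ X, χ ⟨n, h⟩ = true} ∈ I}

/-- The set of `I`-cluster points of a bounded sequence `x ∈ ℓ∞`. -/
def IClusterPts (I : Set (Set ℕ)) (x : lp (fun _ : ℕ => ℝ) ∞) : Set ℝ :=
  {t : ℝ | ∀ ε > (0 : ℝ), {n : ℕ | |x n - t| ≤ ε} ∉ I}

/-!
A topological 0-1 law makes an ideal with the Baire property meagre in Cantor space, and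
Talagrand's characterisation of meagre ideals then gives an interval partition of `ℕ` and sets
`E k` in the `k`-th interval such that no set containing infinitely many `E k` lies in `I`.
Label the intervals by pairs `(i, q)`, `q` rational in `[0, 1]`, each pair infinitely often, and
send `y ∈ ℓ∞` to the sequence equal to `q * y i` on an interval labelled `(i, q)`. This is a
linear isometry of `ℓ∞` into itself, so its range `V` is closed and, like `ℓ∞`, has density
continuum; and if `y i ≠ 0`, every `t * y i` with `t ∈ [0, 1]` is an `I`-cluster point of the
image of `y`.
-/

open Set Filter Topology PiNat
open scoped lp

section CantorSpace

variable {ι : Type*}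

def xorHomeo (δ : ι → Bool) : (ι → Bool) ≃ₜ (ι → Bool) where
  toFun χ i := xor (χ i) (δ i)
  invFun χ i := xor (χ i) (δ i)
  left_inv χ := by funext i; simp
  right_inv χ := by funext i; simp
  continuous_toFun := continuous_pi fun i =>
    (continuous_of_discreteTopology (f := fun b => xor b (δ i))).comp (continuous_apply i)
  continuous_invFun := continuous_pi fun i =>
    (continuous_of_discreteTopology (f := fun b => xor b (δ i))).comp (continuous_apply i)

@[simp]
lemma xorHomeo_apply (δ χ : ι → Bool) (i : ι) : xorHomeo δ χ i = xor (χ i) (δ i) := rfl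

@[simp]
lemma xorHomeo_xorHomeo (δ χ : ι → Bool) : xorHomeo δ (xorHomeo δ χ) = χ := by
  funext i; simp

def prefixSeq {m : ℕ} (v : Fin m → Bool) (n : ℕ) : Bool :=
  if h : n < m then v ⟨n, h⟩ else false

lemma prefixSeq_of_le {m n : ℕ} (v : Fin m → Bool) (h : m ≤ n) : prefixSeq v n = false := by
  simp [prefixSeq, not_lt.2 h]

lemma exists_xorHomeo_prefixSeq_mem_cylinder (χ χ₀ : ℕ → Bool) (m : ℕ) :
    ∃ v : Fin m → Bool, xorHomeo (prefixSeq v) χ ∈ cylinder χ₀ m :=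
  ⟨fun i => xor (χ i) (χ₀ i), fun n hn => by simp [prefixSeq, hn]⟩

lemma eventually_cylinder_subset {O : Set (ℕ → Bool)} (hO : IsOpen O) {χ : ℕ → Bool}
    (hχ : χ ∈ O) : ∀ᶠ n in atTop, cylinder χ n ⊆ O := by
  obtain ⟨_, ⟨x, n, rfl⟩, hχx, hxO⟩ :=
    (isTopologicalBasis_cylinders _).exists_subset_of_mem_open hχ hO
  rw [mem_cylinder_iff_eq] at hχx
  exact eventually_atTop.2 ⟨n, fun k hk => (cylinder_anti χ hk).trans (hχx ▸ hxO)⟩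

lemma exists_block_forcing_mem {W : Set (ℕ → Bool)} (hWo : IsOpen W) (hWd : Dense W)
    (m₀ : ℕ) : ∃ m₁ > m₀, ∃ σ : ℕ → Bool, ∀ χ, (∀ n ∈ Ico m₀ m₁, χ n = σ n) → χ ∈ W := by
  -- `G` consists of the `τ` all of whose modifications below `m₀` lie in `W`
  set G := ⋂ v : Fin m₀ → Bool, xorHomeo (prefixSeq v) ⁻¹' W
  have hGo : IsOpen G :=
    isOpen_iInter_of_finite fun v => hWo.preimage (xorHomeo _).continuous
  have hGd : Dense G := dense_iInter_of_isOpen (fun v => hWo.preimage (xorHomeo _).continuous)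
    fun v => hWd.preimage (xorHomeo _).isOpenMap
  obtain ⟨σ, hσ⟩ := hGd.nonempty
  obtain ⟨m₁, hcyl, hm₁⟩ :=
    ((eventually_cylinder_subset hGo hσ).and (eventually_gt_atTop m₀)).exists
  refine ⟨m₁, hm₁, σ, fun χ hχ => ?_⟩
  obtain ⟨v, hv⟩ := exists_xorHomeo_prefixSeq_mem_cylinder χ σ m₀
  have hG : xorHomeo (prefixSeq v) χ ∈ G := hcyl fun n hn => by
    rcases lt_or_ge n m₀ with h | h
    · exact hv n h
    · rw [xorHomeo_apply, prefixSeq_of_le v h, Bool.xor_false]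
      exact hχ n ⟨h, hn⟩
  simpa using mem_iInter.1 hG v

lemma exists_seq_isOpen_dense_of_mem_residual {X : Type*} [TopologicalSpace X] {s : Set X}
    (hs : s ∈ residual X) :
    ∃ U : ℕ → Set X, (∀ i, IsOpen (U i)) ∧ (∀ i, Dense (U i)) ∧ ⋂ i, U i ⊆ s := by
  obtain ⟨S, hSo, hSd, hSc, hSs⟩ := mem_residual_iff.1 hs
  obtain ⟨U, hU⟩ := (hSc.insert univ).exists_eq_range (insert_nonempty _ _)
  have hUS (i : ℕ) : U i = univ ∨ U i ∈ S := by simpa [← hU] using mem_range_self (f := U) i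
  refine ⟨U, fun i => ?_, fun i => ?_, ?_⟩
  · rcases hUS i with h | h
    · exact h ▸ isOpen_univ
    · exact hSo _ h
  · rcases hUS i with h | h
    · exact h ▸ dense_univ
    · exact hSd _ h
  · rw [← sInter_range, ← hU, sInter_insert, univ_inter]
    exact hSs

theorem exists_blocks_of_isMeagre {S : Set (ℕ → Bool)} (hS : IsMeagre S) :
    ∃ (m : ℕ → ℕ) (σ : ℕ → ℕ → Bool), StrictMono m ∧
      ∀ χ, {k | ∀ n ∈ Ico (m k) (m (k + 1)), χ n = σ k n}.Infinite → χ ∉ S := by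
  obtain ⟨U, hUo, hUd, hU⟩ := exists_seq_isOpen_dense_of_mem_residual hS
  have hWo (k : ℕ) : IsOpen (⋂ i ≤ k, U i) := (finite_Iic k).isOpen_biInter fun i _ => hUo i
  have hWd (k : ℕ) : Dense (⋂ i ≤ k, U i) :=
    dense_biInter_of_isOpen (fun i _ => hUo i) (to_countable _) fun i _ => hUd i
  -- block `k` forces membership in `⋂ i ≤ k, U i`, whatever `χ` does outside it
  choose M hM σ hσ using fun k m₀ => exists_block_forcing_mem (hWo k) (hWd k) m₀
  let m : ℕ → ℕ := fun k => Nat.rec 0 (fun k mk => M k mk) k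
  refine ⟨m, fun k => σ k (m k), strictMono_nat_of_lt_succ fun k => hM k (m k),
    fun χ hχ => hU (mem_iInter.2 fun i => ?_)⟩
  obtain ⟨k, hk, hik⟩ := hχ.exists_gt i
  exact mem_iInter₂.1 (hσ k (m k) χ hk) i hik.le

end CantorSpace

lemma HasBaireProperty.preimage_homeomorph {α β : Type*} [TopologicalSpace α]
    [TopologicalSpace β] (e : α ≃ₜ β) {s : Set β} (hs : HasBaireProperty s) :
    HasBaireProperty (e ⁻¹' s) := by
  obtain ⟨O, hO, hsO⟩ := hs
  refine ⟨e ⁻¹' O, hO.preimage e.continuous, ?_⟩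
  rw [← preimage_symmDiff]
  exact hsO.preimage_of_isOpenMap e.continuous e.isOpenMap

theorem isMeagre_or_isMeagre_compl_of_hasBaireProperty {S : Set (ℕ → Bool)}
    (hS : HasBaireProperty S)
    (htail : ∀ χ ψ : ℕ → Bool, (∀ᶠ n in atTop, χ n = ψ n) → χ ∈ S → ψ ∈ S) :
    IsMeagre S ∨ IsMeagre Sᶜ := by
  obtain ⟨O, hOo, hSO⟩ := hS
  rcases O.eq_empty_or_nonempty with rfl | ⟨χ₀, hχ₀⟩
  · rw [← bot_eq_empty, symmDiff_bot] at hSO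
    exact Or.inl hSO
  right
  obtain ⟨m, hm⟩ := (eventually_cylinder_subset hOo hχ₀).exists
  have hC : IsMeagre (cylinder χ₀ m \ S) :=
    hSO.mono fun χ hχ => mem_symmDiff.2 (Or.inr ⟨hm hχ.1, hχ.2⟩)
  -- finite modifications move `cylinder χ₀ m` onto every cylinder of length `m`
  refine (isMeagre_iUnion fun v : Fin m → Bool => hC.preimage_of_isOpenMap
    (xorHomeo (prefixSeq v)).continuous (xorHomeo _).isOpenMap).mono fun χ hχ => ?_
  obtain ⟨v, hv⟩ := exists_xorHomeo_prefixSeq_mem_cylinder χ χ₀ m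
  refine mem_iUnion.2 ⟨v, hv, fun hS => hχ (htail _ _ ?_ hS)⟩
  exact eventually_atTop.2 ⟨m, fun n hn => by simp [prefixSeq_of_le v hn]⟩

lemma IsNatIdeal.finite_mem {I : Set (Set ℕ)} (hI : IsNatIdeal I) {A : Set ℕ}
    (hA : A.Finite) : A ∈ I := by
  induction A, hA using Set.Finite.induction_on with
  | empty => exact hI.1 _ {0} (empty_subset _) (hI.2.2.1 0)
  | insert _ _ ih => exact insert_eq .. ▸ hI.2.1 _ _ (hI.2.2.1 _) ih

theorem IsNatIdeal.isMeagre_of_hasBaireProperty {I : Set (Set ℕ)} (hI : IsNatIdeal I)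
    (hBP : HasBaireProperty {χ : ℕ → Bool | {n | χ n = true} ∈ I}) :
    IsMeagre {χ : ℕ → Bool | {n | χ n = true} ∈ I} := by
  set S := {χ : ℕ → Bool | {n | χ n = true} ∈ I}
  refine (isMeagre_or_isMeagre_compl_of_hasBaireProperty hBP fun χ ψ h hχ => ?_).resolve_right
    fun hSc => ?_
  · obtain ⟨N, hN⟩ := eventually_atTop.1 h
    refine hI.1 _ _ (fun n hn => ?_) (hI.2.1 _ _ hχ (hI.finite_mem (finite_Iio N)))
    rcases lt_or_ge n N with h | h
    · exact Or.inr h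
    · exact Or.inl ((hN n h).trans hn)
  · -- `S` and its preimage under `χ ↦ !χ` are both residual, so some `χ` and `!χ` lie in `S`
    have hS : S ∈ residual _ := by simpa [IsMeagre] using hSc
    have hS' : xorHomeo (fun _ => true) ⁻¹' S ∈ residual _ := by
      simpa [IsMeagre] using
        hSc.preimage_of_isOpenMap (xorHomeo _).continuous (xorHomeo _).isOpenMap
    obtain ⟨χ, hχ, hχ'⟩ := (dense_of_mem_residual (inter_mem hS hS')).nonempty
    refine hI.2.2.2 (hI.1 _ _ (fun n _ => ?_) (hI.2.1 _ _ hχ hχ'))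
    cases h : χ n <;> simp [h]

lemma IdealHasHereditaryBaireProperty.hasBaireProperty {I : Set (Set ℕ)}
    (hBP : IdealHasHereditaryBaireProperty I) (huniv : (univ : Set ℕ) ∉ I) :
    HasBaireProperty {χ : ℕ → Bool | {n | χ n = true} ∈ I} := by
  let e := Homeomorph.piCongrLeft (Y := fun _ => Bool) (Equiv.Set.univ ℕ).symm
  have he (χ : ℕ → Bool) (n : ℕ) : e χ ⟨n, mem_univ n⟩ = χ n :=
    Equiv.piCongrLeft_apply_apply (fun _ => Bool) (Equiv.Set.univ ℕ).symm χ n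
  convert (hBP univ huniv).preimage_homeomorph e using 1
  ext χ
  simp [he]

lemma StrictMono.eq_of_mem_Ico {m : ℕ → ℕ} (hm : StrictMono m) {j k n : ℕ}
    (hj : n ∈ Ico (m j) (m (j + 1))) (hk : n ∈ Ico (m k) (m (k + 1))) : j = k :=
  le_antisymm (Nat.lt_succ_iff.1 (hm.lt_iff_lt.1 (hj.1.trans_lt hk.2)))
    (Nat.lt_succ_iff.1 (hm.lt_iff_lt.1 (hk.1.trans_lt hj.2)))

theorem IsNatIdeal.exists_blocks_notMem_of_isMeagre {I : Set (Set ℕ)} (hI : IsNatIdeal I)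
    (hS : IsMeagre {χ : ℕ → Bool | {n | χ n = true} ∈ I}) :
    ∃ m : ℕ → ℕ, StrictMono m ∧ ∃ E : ℕ → Set ℕ, (∀ k, E k ⊆ Ico (m k) (m (k + 1))) ∧
      ∀ X, {k | E k ⊆ X}.Infinite → X ∉ I := by
  classical
  obtain ⟨m, σ, hm, hσ⟩ := exists_blocks_of_isMeagre hS
  refine ⟨m, hm, fun k => {n ∈ Ico (m k) (m (k + 1)) | σ k n = true},
    fun k => sep_subset _ _, fun X hX hXI => ?_⟩
  let K := {k | {n ∈ Ico (m k) (m (k + 1)) | σ k n = true} ⊆ X}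
  let χ : ℕ → Bool := fun n => decide (∃ k ∈ K, n ∈ Ico (m k) (m (k + 1)) ∧ σ k n = true)
  refine hσ χ (hX.mono fun k hk n hn => ?_) (hI.1 _ X ?_ hXI)
  · rw [Bool.eq_iff_iff]
    simp only [χ, decide_eq_true_iff]
    refine ⟨fun ⟨j, _, hnj, hj⟩ => ?_, fun h => ⟨k, hk, hn, h⟩⟩
    rwa [← hm.eq_of_mem_Ico hnj hn]
  · intro n hn
    obtain ⟨k, hk, hnk⟩ := of_decide_eq_true (p := ∃ k ∈ K, _) hn
    exact hk hnk

open Classical in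
noncomputable def blockIndex (m : ℕ → ℕ) (n : ℕ) : ℕ :=
  if h : ∃ k, n ∈ Ico (m k) (m (k + 1)) then h.choose else 0

lemma blockIndex_eq {m : ℕ → ℕ} (hm : StrictMono m) {k n : ℕ}
    (hn : n ∈ Ico (m k) (m (k + 1))) : blockIndex m n = k := by
  have h : ∃ k, n ∈ Ico (m k) (m (k + 1)) := ⟨k, hn⟩
  rw [blockIndex, dif_pos h]
  exact hm.eq_of_mem_Ico h.choose_spec hn

lemma blockIndex_surjective {m : ℕ → ℕ} (hm : StrictMono m) : (blockIndex m).Surjective :=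
  fun k => ⟨m k, blockIndex_eq hm ⟨le_rfl, hm (Nat.lt_succ_self k)⟩⟩

section WeightedComposition

variable {ι κ : Type*}

lemma norm_apply_mul_le (y : ℓ^∞(κ, ℝ)) (j : κ) (c : unitInterval) : ‖y j * c‖ ≤ ‖y‖ := by
  rw [norm_mul, Real.norm_of_nonneg c.2.1]
  calc ‖y j‖ * c ≤ ‖y‖ * 1 :=
        mul_le_mul (lp.norm_apply_le_norm ENNReal.top_ne_zero y j) c.2.2 c.2.1 (norm_nonneg _)
    _ = ‖y‖ := mul_one _

noncomputable def weightedComp (g : ι → κ × unitInterval) : ℓ^∞(κ, ℝ) →ₗ[ℝ] ℓ^∞(ι, ℝ) where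
  toFun y := ⟨fun n => y (g n).1 * (g n).2,
    memℓp_infty ⟨‖y‖, by rintro _ ⟨n, rfl⟩; exact norm_apply_mul_le y _ _⟩⟩
  map_add' y z := by ext n; exact add_mul _ _ _
  map_smul' c y := by ext n; exact mul_assoc _ _ _

lemma weightedComp_apply (g : ι → κ × unitInterval) (y : ℓ^∞(κ, ℝ)) (n : ι) :
    weightedComp g y n = y (g n).1 * (g n).2 := rfl

lemma isometry_weightedComp {g : ι → κ × unitInterval} (hg : ∀ j, (j, 1) ∈ range g) :
    Isometry (weightedComp g) := by
  refine AddMonoidHomClass.isometry_of_norm _ fun y => le_antisymm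
    (lp.norm_le_of_forall_le (norm_nonneg y) fun n => norm_apply_mul_le y _ _)
    (lp.norm_le_of_forall_le (norm_nonneg _) fun j => ?_)
  obtain ⟨n, hn⟩ := hg j
  calc ‖y j‖ = ‖weightedComp g y n‖ := by simp [weightedComp_apply, hn]
    _ ≤ ‖weightedComp g y‖ := lp.norm_apply_le_norm ENNReal.top_ne_zero _ n

end WeightedComposition

section Labels

/-- The extra `ℕ` coordinate makes every label `(i, q)`, `q ∈ ℚ ∩ [0, 1]`, occur infinitely
often. -/
noncomputable def label (k : ℕ) : ℕ × unitInterval :=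
  let q := (Denumerable.eqv (ℕ × ℚ × ℕ)).symm k
  (q.1, projIcc 0 1 zero_le_one q.2.1)

lemma mk_one_mem_range_label (i : ℕ) : (i, 1) ∈ range label :=
  ⟨Denumerable.eqv _ (i, (1 : ℚ), 0), by simp [label]⟩

lemma infinite_setOf_label_near (i : ℕ) (t : unitInterval) {δ : ℝ} (hδ : 0 < δ) :
    {k | (label k).1 = i ∧ |((label k).2 : ℝ) - t| ≤ δ}.Infinite := by
  obtain ⟨q, hq₁, hq₂⟩ := exists_rat_btwn (show (t : ℝ) - δ < t + δ by linarith)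
  refine infinite_of_injective_forall_mem (f := fun j : ℕ => Denumerable.eqv _ (i, q, j))
    (fun a b h => by simpa using (Denumerable.eqv _).injective h)
    fun j => ⟨by simp [label], ?_⟩
  calc |((label _).2 : ℝ) - t|
      = |(projIcc 0 1 zero_le_one (q : ℝ) : ℝ) - projIcc 0 1 zero_le_one (t : ℝ)| := by
        simp only [label, Equiv.symm_apply_apply, projIcc_of_mem _ t.2]
    _ ≤ |(q : ℝ) - t| := abs_projIcc_sub_projIcc _
    _ ≤ δ := abs_sub_le_iff.2 ⟨by linarith, by linarith⟩

theorem mul_mem_iClusterPts_weightedComp {I : Set (Set ℕ)} {m : ℕ → ℕ} (hm : StrictMono m)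
    {E : ℕ → Set ℕ} (hEm : ∀ k, E k ⊆ Ico (m k) (m (k + 1)))
    (hE : ∀ X, {k | E k ⊆ X}.Infinite → X ∉ I) (y : ℓ^∞(ℕ, ℝ)) {i : ℕ} (hi : y i ≠ 0)
    (t : unitInterval) : y i * t ∈ IClusterPts I (weightedComp (label ∘ blockIndex m) y) := by
  intro ε hε
  have hyi : 0 < |y i| := abs_pos.2 hi
  refine hE _ ((infinite_setOf_label_near i t (div_pos hε hyi)).mono ?_)
  rintro k ⟨hik, hk⟩ n hn
  calc |weightedComp (label ∘ blockIndex m) y n - y i * t|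
      = |y i| * |((label k).2 : ℝ) - t| := by
        rw [weightedComp_apply, Function.comp_apply, blockIndex_eq hm (hEm k hn), hik,
          ← mul_sub, abs_mul]
    _ ≤ |y i| * (ε / |y i|) := by gcongr
    _ = ε := mul_div_cancel₀ _ hyi.ne'

end Labels

section Cardinality

open Cardinal

lemma mk_eq_continuum_of_forall_mul_mem {S : Set ℝ} {c : ℝ} (hc : c ≠ 0)
    (h : ∀ t : unitInterval, c * t ∈ S) : #S = 𝔠 := by
  refine le_antisymm ((mk_set_le S).trans_eq mk_real) ?_
  rw [← mk_Icc_real zero_lt_one]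
  exact mk_le_of_injective (f := fun t : unitInterval => (⟨c * t, h t⟩ : S))
    fun a b hab => Subtype.ext (mul_left_cancel₀ hc (congrArg Subtype.val hab))

universe u

lemma Dense.mk_le_of_pairwise_le_dist {α ι : Type u} [PseudoMetricSpace α] {D : Set α}
    (hD : Dense D) {f : ι → α} {δ : ℝ} (hδ : 0 < δ)
    (hf : Pairwise fun i j => δ ≤ dist (f i) (f j)) : #ι ≤ #D := by
  choose d hdD hd using fun i => Metric.mem_closure_iff.1 (hD (f i)) (δ / 2) (half_pos hδ)
  refine mk_le_of_injective (f := fun i => (⟨d i, hdD i⟩ : D)) fun i j hij => ?_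
  by_contra hne
  have hdij : d i = d j := congrArg Subtype.val hij
  have hdj : dist (f j) (d i) < δ / 2 := hdij ▸ hd j
  linarith [hf hne, hd i, dist_triangle_right (f i) (f j) (d i)]

noncomputable def indicatorSeq {ι : Type*} (A : Set ι) : ℓ^∞(ι, ℝ) :=
  ⟨A.indicator 1, memℓp_infty ⟨1, by
    rintro _ ⟨n, rfl⟩
    exact (norm_indicator_le_norm_self _ n).trans (by simp)⟩⟩

lemma one_le_dist_indicatorSeq {ι : Type*} {A B : Set ι} (h : A ≠ B) :
    1 ≤ dist (indicatorSeq A) (indicatorSeq B) := by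
  obtain ⟨n, hn⟩ := symmDiff_nonempty.2 h
  rw [dist_eq_norm]
  refine le_trans ?_ (lp.norm_apply_le_norm ENNReal.top_ne_zero _ n)
  rw [lp.coeFn_sub, Pi.sub_apply]
  rcases hn with ⟨hA, hB⟩ | ⟨hB, hA⟩ <;> simp [indicatorSeq, hA, hB]

end Cardinality

/-- If an ideal `I` on `ℕ` has the hereditary Baire property, then the set of
bounded sequences with continuum many `I`-cluster points contains, up to zero, a closed
subspace of `ℓ∞` of density continuum. -/
theorem stmt7 (I : Set (Set ℕ)) (hI : IsNatIdeal I)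
    (hBP : IdealHasHereditaryBaireProperty I) :
    ∃ V : Submodule ℝ (lp (fun _ : ℕ => ℝ) ∞),
      IsClosed (V : Set (lp (fun _ : ℕ => ℝ) ∞)) ∧
      (V : Set (lp (fun _ : ℕ => ℝ) ∞)) ⊆
        {x | Cardinal.mk ↥(IClusterPts I x) = Cardinal.continuum} ∪ {0} ∧
      ∀ D : Set V, Dense D → Cardinal.continuum ≤ Cardinal.mk D := by
  obtain ⟨m, hm, E, hEm, hE⟩ := hI.exists_blocks_notMem_of_isMeagre
    (hI.isMeagre_of_hasBaireProperty (hBP.hasBaireProperty hI.2.2.2))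
  set T := weightedComp (label ∘ blockIndex m)
  have hT : Isometry T := isometry_weightedComp fun i => by
    rw [range_comp, (blockIndex_surjective hm).range_eq, image_univ]
    exact mk_one_mem_range_label i
  refine ⟨LinearMap.range T, ?_, ?_, fun D hD => ?_⟩
  · rw [LinearMap.coe_range]
    exact hT.isClosedEmbedding.isClosed_range
  · rintro _ ⟨y, rfl⟩
    by_cases hy : y = 0
    · simp [hy]
    obtain ⟨i, hi⟩ : ∃ i, y i ≠ 0 := by
      by_contra! h
      exact hy (lp.ext (funext h))
    exact Or.inl (mk_eq_continuum_of_forall_mul_mem hi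
      (mul_mem_iClusterPts_weightedComp hm hEm hE y hi))
  · refine Cardinal.mk_set_nat.symm.le.trans <| hD.mk_le_of_pairwise_le_dist
      (f := fun A => ⟨T (indicatorSeq A), LinearMap.mem_range_self T _⟩) one_pos fun A B h => ?_
    simpa [Subtype.dist_eq, hT.dist_eq] using one_le_dist_indicatorSeq h
end

section
/- There exists a closed ℝ-submodule V of ℓ∞ such that every nonzero element x of V has a set of cluster points Lim(x) of cardinality continuum (↑V ⊆ {x ∈ ℓ∞ | Cardinal.mk ↥(Lim x) = Cardinal.continuum} ∪ {0}), and every subset D ⊆ ↑V that is dense in V has cardinality at least Cardinal.continuum (so V is a Banach space of density continuum). -/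
open scoped ENNReal

/-- The set of cluster points of a bounded sequence `x ∈ ℓ∞`. -/
def LimSet (x : lp (fun _ : ℕ => ℝ) ∞) : Set ℝ :=
  {t : ℝ | ∀ ε > (0 : ℝ), {n : ℕ | |x n - t| < ε}.Infinite}

noncomputable section StmtEightAux

instance : Nonempty (lp (fun _ : ℕ => ℝ) ∞) := ⟨0⟩

/-- An enumeration of the rationals. -/
def qe : ℕ ≃ ℚ := (Denumerable.eqv ℚ).symm

/-- A sequence dense in `[0,1]`, taking the value 1. -/
def tseq (m : ℕ) : ℝ := max 0 (min 1 ((qe m : ℚ) : ℝ))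

lemma tseq_mem (m : ℕ) : tseq m ∈ Set.Icc (0:ℝ) 1 :=
  ⟨le_max_left _ _, max_le (by norm_num) (min_le_left _ _)⟩

lemma tseq_eq_of_mem {r : ℚ} (h0 : (0:ℝ) ≤ (r:ℝ)) (h1 : (r:ℝ) ≤ 1) :
    tseq (qe.symm r) = (r : ℝ) := by
  simp only [tseq, Equiv.apply_symm_apply]
  rw [min_eq_right h1, max_eq_right h0]

lemma tseq_one : tseq (qe.symm 1) = 1 := by
  simpa using tseq_eq_of_mem (r := 1) (by norm_num) (by norm_num)

/-- Density of `tseq` in `[0,1]` with infinite multiplicity. -/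
lemma tseq_dense {s : ℝ} (hs : s ∈ Set.Icc (0:ℝ) 1) {δ : ℝ} (hδ : 0 < δ) :
    {m : ℕ | |tseq m - s| < δ}.Infinite := by
  obtain ⟨hs0, hs1⟩ := hs
  set u : ℝ := max (s - δ) 0 with hu
  set v : ℝ := min (s + δ) 1 with hv
  have huv : u < v :=
    max_lt (lt_min (by linarith) (by linarith))
      (lt_min (by linarith) (by norm_num))
  obtain ⟨a, ha1, ha2⟩ := exists_rat_btwn huv
  obtain ⟨b, hb1, hb2⟩ := exists_rat_btwn ha2
  have hba : (0:ℚ) < b - a := by exact_mod_cast sub_pos.mpr hb1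
  -- the injection n ↦ a + (b-a)/(n+2)
  set r : ℕ → ℚ := fun n => a + (b - a) / (n + 2) with hr
  have hrmem : ∀ n, a < r n ∧ r n < b := by
    intro n
    constructor
    · have : (0:ℚ) < (b - a) / (n + 2) := by positivity
      simp only [hr]; linarith
    · have h2 : (1:ℚ) < (n:ℚ) + 2 := by
        have : (0:ℚ) ≤ (n:ℚ) := by exact_mod_cast Nat.zero_le n
        linarith
      have : (b - a) / (n + 2) < (b - a) := by
        rw [div_lt_iff₀ (by linarith)]
        nlinarith
      simp only [hr]; linarith
  have hrange : ∀ n, u < (r n : ℝ) ∧ (r n : ℝ) < v := by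
    intro n
    obtain ⟨h1, h2⟩ := hrmem n
    have h1' : (a:ℝ) < (r n : ℝ) := by exact_mod_cast h1
    have h2' : (r n : ℝ) < (b:ℝ) := by exact_mod_cast h2
    exact ⟨lt_trans ha1 h1', lt_trans h2' hb2⟩
  have hrsa : StrictAnti r := by
    intro n m hnm
    have h3 : ((n:ℚ) + 2) < ((m:ℚ) + 2) := by
      have : (n:ℚ) < (m:ℚ) := by exact_mod_cast hnm
      linarith
    have h2 : (0:ℚ) < (n:ℚ) + 2 := by positivity
    have := div_lt_div_of_pos_left hba h2 h3
    simp only [hr]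
    linarith
  have hrinj : Function.Injective r := hrsa.injective
  apply Set.infinite_of_injective_forall_mem
    (f := fun n => qe.symm (r n))
  · exact fun n m h => hrinj (qe.symm.injective h)
  · intro n
    obtain ⟨h1, h2⟩ := hrange n
    have h0 : (0:ℝ) ≤ (r n : ℝ) := le_trans (le_max_right _ _) (le_of_lt h1)
    have h1' : (r n : ℝ) ≤ 1 := le_trans (le_of_lt h2) (min_le_right _ _)
    have ht : tseq (qe.symm (r n)) = (r n : ℝ) := tseq_eq_of_mem h0 h1'
    simp only [Set.mem_setOf_eq, ht]
    rw [abs_lt]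
    constructor
    · have : s - δ ≤ u := le_max_left _ _
      linarith
    · have : v ≤ s + δ := min_le_left _ _
      linarith

/-- The underlying function of the embedding. -/
def Tfun (x : lp (fun _ : ℕ => ℝ) ∞) : ℕ → ℝ :=
  fun n => x n.unpair.1 * tseq n.unpair.2

lemma Tfun_pair (x : lp (fun _ : ℕ => ℝ) ∞) (k m : ℕ) :
    Tfun x (Nat.pair k m) = x k * tseq m := by
  simp [Tfun, Nat.unpair_pair]

lemma Tfun_bound (x : lp (fun _ : ℕ => ℝ) ∞) (n : ℕ) : ‖Tfun x n‖ ≤ ‖x‖ := by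
  have h1 : ‖x n.unpair.1‖ ≤ ‖x‖ :=
    lp.norm_apply_le_norm (by norm_num) x n.unpair.1
  have h2 := tseq_mem n.unpair.2
  have h3 : |tseq n.unpair.2| ≤ 1 := abs_le.mpr ⟨by linarith [h2.1], h2.2⟩
  calc ‖Tfun x n‖ = ‖x n.unpair.1‖ * |tseq n.unpair.2| := by
        simp [Tfun, abs_mul, Real.norm_eq_abs]
    _ ≤ ‖x‖ * 1 := mul_le_mul h1 h3 (abs_nonneg _) (norm_nonneg _)
    _ = ‖x‖ := mul_one _

lemma Tfun_mem (x : lp (fun _ : ℕ => ℝ) ∞) : Memℓp (Tfun x) ∞ := by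
  apply memℓp_infty
  exact ⟨‖x‖, by rintro - ⟨n, rfl⟩; exact Tfun_bound x n⟩

/-- The linear embedding. -/
def Tmap : lp (fun _ : ℕ => ℝ) ∞ →ₗ[ℝ] lp (fun _ : ℕ => ℝ) ∞ where
  toFun x := ⟨Tfun x, Tfun_mem x⟩
  map_add' x y := by
    ext n
    have h1 : (x + y) n.unpair.1 = x n.unpair.1 + y n.unpair.1 := by
      rw [lp.coeFn_add]; rfl
    show Tfun (x + y) n = Tfun x n + Tfun y n
    simp [Tfun, h1, add_mul]
  map_smul' c x := by
    ext n
    have h1 : (c • x) n.unpair.1 = c * x n.unpair.1 := by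
      rw [lp.coeFn_smul]; rfl
    show Tfun (c • x) n = c * Tfun x n
    simp [Tfun, h1, mul_assoc]

lemma Tmap_apply (x : lp (fun _ : ℕ => ℝ) ∞) (n : ℕ) : (Tmap x) n = Tfun x n := rfl

lemma Tmap_norm (x : lp (fun _ : ℕ => ℝ) ∞) : ‖Tmap x‖ = ‖x‖ := by
  apply le_antisymm
  · exact lp.norm_le_of_forall_le (norm_nonneg x) fun n => Tfun_bound x n
  · rw [lp.norm_eq_ciSup]
    apply ciSup_le
    intro k
    have h : ‖x k‖ = ‖(Tmap x) (Nat.pair k (qe.symm 1))‖ := by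
      rw [Tmap_apply, Tfun_pair, tseq_one, mul_one]
    rw [h]
    exact lp.norm_apply_le_norm (by norm_num) (Tmap x) _

lemma Tmap_isometry : Isometry (fun x => Tmap x) :=
  AddMonoidHomClass.isometry_of_norm Tmap Tmap_norm

end StmtEightAux

set_option maxHeartbeats 1000000 in
set_option synthInstance.maxHeartbeats 200000 in
/-- The set of bounded sequences whose set of cluster points has cardinality
continuum contains, up to zero, a closed subspace of `ℓ∞` of density continuum. -/
theorem stmt8 :
    ∃ V : Submodule ℝ (lp (fun _ : ℕ => ℝ) ∞),
      IsClosed (V : Set (lp (fun _ : ℕ => ℝ) ∞)) ∧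
      (V : Set (lp (fun _ : ℕ => ℝ) ∞)) ⊆
        {x | Cardinal.mk ↥(LimSet x) = Cardinal.continuum} ∪ {0} ∧
      ∀ D : Set V, Dense D → Cardinal.continuum ≤ Cardinal.mk D := by
  classical
  refine ⟨LinearMap.range Tmap, ?_, ?_, ?_⟩
  · -- closedness
    have h := Tmap_isometry.isClosedEmbedding
    have heq : (LinearMap.range Tmap : Set (lp (fun _ : ℕ => ℝ) ∞)) =
        Set.range (fun x => Tmap x) := by
      ext y; simp [LinearMap.mem_range, Set.mem_range]
    rw [heq]
    exact h.isClosed_range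
  · -- cluster points
    rintro y ⟨x, rfl⟩
    by_cases hx : x = 0
    · right
      simp [hx]
    · left
      -- find a nonzero coordinate
      have hk : ∃ k, x k ≠ 0 := by
        by_contra h
        push_neg at h
        exact hx (by ext k; simpa using h k)
      obtain ⟨k, hc⟩ := hk
      set c := x k with hcdef
      have himg : (fun s => c * s) '' Set.Icc (0:ℝ) 1 ⊆ LimSet (Tmap x) := by
        rintro - ⟨s, hs, rfl⟩
        intro ε hε
        have hδ : 0 < ε / |c| := div_pos hε (abs_pos.mpr hc)
        have hinf := tseq_dense hs hδ
        have hsub : (Nat.pair k) '' {m | |tseq m - s| < ε / |c|} ⊆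
            {n | |(Tmap x) n - c * s| < ε} := by
          rintro - ⟨m, hm, rfl⟩
          simp only [Set.mem_setOf_eq] at hm ⊢
          rw [Tmap_apply, Tfun_pair]
          have heq2 : x k * tseq m - c * s = c * (tseq m - s) := by rw [hcdef]; ring
          rw [heq2, abs_mul]
          calc |c| * |tseq m - s| < |c| * (ε / |c|) :=
                mul_lt_mul_of_pos_left hm (abs_pos.mpr hc)
            _ = ε := by field_simp
        exact Set.Infinite.mono hsub
          (hinf.image (Function.Injective.injOn fun a b h =>
            ((Nat.pair_eq_pair.mp h).2)))
      -- cardinality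
      apply le_antisymm
      · calc Cardinal.mk ↥(LimSet (Tmap x)) ≤ Cardinal.mk ℝ := Cardinal.mk_set_le _
          _ = Cardinal.continuum := Cardinal.mk_real
      · calc Cardinal.continuum = Cardinal.mk ↥(Set.Icc (0:ℝ) 1) :=
              (Cardinal.mk_Icc_real zero_lt_one).symm
          _ = Cardinal.mk ↥((fun s => c * s) '' Set.Icc (0:ℝ) 1) :=
              (Cardinal.mk_image_eq (mul_right_injective₀ hc)).symm
          _ ≤ Cardinal.mk ↥(LimSet (Tmap x)) := Cardinal.mk_le_mk_of_subset himg
  · -- density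
    intro D hD
    -- indicator sequences
    have humem : ∀ A : Set ℕ, Memℓp (fun n => if n ∈ A then (1:ℝ) else 0) ∞ := by
      intro A
      apply memℓp_infty
      refine ⟨1, ?_⟩
      rintro - ⟨n, rfl⟩
      by_cases h : n ∈ A <;> simp [h]
    set u : Set ℕ → lp (fun _ : ℕ => ℝ) ∞ := fun A => ⟨_, humem A⟩ with hu
    set pA : Set ℕ → ↥(LinearMap.range Tmap) :=
      fun A => ⟨Tmap (u A), LinearMap.mem_range_self _ _⟩ with hpA
    have hchoice : ∀ A : Set ℕ, ∃ d ∈ D, dist (pA A) d < 1/2 := by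
      intro A
      obtain ⟨y, hy1, hy2⟩ := Metric.dense_iff.mp hD (pA A) (1/2) (by norm_num)
      exact ⟨y, hy2, by simpa [dist_comm] using Metric.mem_ball.mp hy1⟩
    choose d hdD hdist using hchoice
    -- separation: for A ≠ B, dist (pA A) (pA B) ≥ 1
    have hsep : ∀ A B : Set ℕ, A ≠ B → (1:ℝ) ≤ dist (pA A) (pA B) := by
      intro A B hAB
      obtain ⟨k, hk⟩ := Set.symmDiff_nonempty.mpr hAB
      have hval : ‖(u A - u B) k‖ = 1 := by
        have hsub : (u A - u B) k = (u A) k - (u B) k := by rw [lp.coeFn_sub]; rfl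
        have hA : (u A) k = if k ∈ A then (1:ℝ) else 0 := rfl
        have hB : (u B) k = if k ∈ B then (1:ℝ) else 0 := rfl
        rw [hsub, hA, hB]
        rcases Set.mem_symmDiff.mp hk with ⟨h1, h2⟩ | ⟨h1, h2⟩ <;>
          simp [h1, h2]
      have h1 : (1:ℝ) ≤ ‖Tmap (u A) - Tmap (u B)‖ := by
        rw [← map_sub]
        have hv1 : ‖(Tmap (u A - u B)) (Nat.pair k (qe.symm 1))‖ = 1 := by
          rw [Tmap_apply, Tfun_pair, tseq_one, mul_one]
          exact hval
        rw [← hv1]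
        exact lp.norm_apply_le_norm (by norm_num) _ _
      rw [Subtype.dist_eq]
      calc (1:ℝ) ≤ ‖Tmap (u A) - Tmap (u B)‖ := h1
        _ = dist (Tmap (u A)) (Tmap (u B)) := (dist_eq_norm _ _).symm
    -- d is injective
    have hinj : Function.Injective d := by
      intro A B h
      by_contra hAB
      have h1 := hdist A
      have h2 := hdist B
      rw [h] at h1
      have h3 := hsep A B hAB
      have htri : dist (pA A) (pA B) ≤ dist (pA A) (d B) + dist (d B) (pA B) :=
        dist_triangle _ _ _
      rw [dist_comm (d B)] at htri
      linarith
    have hd' : Function.Injective (fun A => (⟨d A, hdD A⟩ : D)) := by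
      intro A B h
      exact hinj (congrArg Subtype.val h)
    calc Cardinal.continuum = 2 ^ Cardinal.aleph0 := Cardinal.two_power_aleph0.symm
      _ = 2 ^ Cardinal.mk ℕ := by rw [Cardinal.mk_nat]
      _ = Cardinal.mk (Set ℕ) := Cardinal.mk_set.symm
      _ ≤ Cardinal.mk D := Cardinal.mk_le_of_injective hd'
end

section
/- There exists a closed ℝ-submodule V of ℓ∞ such that for every nonzero element x of V the set Lim(x) of cluster points of x is a nondegenerate closed interval (there exist a b : ℝ with a < b and Lim(x) = Set.Icc a b), and every subset D ⊆ ↑V that is dense in V has cardinality at least Cardinal.continuum (so V is a Banach space of density continuum). -/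
open scoped ENNReal

noncomputable section Stmt9Aux

private def qc (j : ℕ) : ℝ := max (min 1 (((Denumerable.eqv ℚ).symm j : ℚ) : ℝ)) 0

private lemma qc_mem (j : ℕ) : qc j ∈ Set.Icc (0:ℝ) 1 :=
  ⟨le_max_right _ _, max_le (min_le_left _ _) zero_le_one⟩

private lemma qc_exists_one : ∃ j, qc j = 1 := by
  refine ⟨Denumerable.eqv ℚ 1, ?_⟩
  simp [qc, Equiv.symm_apply_apply]

private lemma qc_dense {t : ℝ} (ht : t ∈ Set.Icc (0:ℝ) 1) {ε : ℝ} (hε : 0 < ε) :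
    ∃ j, |qc j - t| < ε := by
  obtain ⟨r, hr1, hr2⟩ := exists_rat_btwn (show t - ε < t by linarith)
  refine ⟨Denumerable.eqv ℚ r, ?_⟩
  have hclip : qc (Denumerable.eqv ℚ r) = max (min 1 (r:ℝ)) 0 := by
    simp [qc, Equiv.symm_apply_apply]
  have htc : t = max (min 1 t) 0 := by
    rw [min_eq_right ht.2, max_eq_left ht.1]
  rw [hclip]
  calc |max (min 1 (r:ℝ)) 0 - t| = |max (min 1 (r:ℝ)) 0 - max (min 1 t) 0| := by rw [← htc]
    _ ≤ |min 1 (r:ℝ) - min 1 t| := abs_max_sub_max_le_abs _ _ _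
    _ ≤ max |(1:ℝ) - 1| |(r:ℝ) - t| := abs_min_sub_min_le_max _ _ _ _
    _ = |(r:ℝ) - t| := by simp
    _ < ε := by rw [abs_lt]; constructor <;> linarith

private def eKJI : ℕ ≃ ℕ × ℕ × ℕ := (Denumerable.eqv (ℕ × ℕ × ℕ)).symm

private abbrev Linf := lp (fun _ : ℕ => ℝ) ∞

private lemma Tmem (y : Linf) : Memℓp (fun n => qc (eKJI n).2.1 * y (eKJI n).1) ∞ := by
  refine memℓp_infty ⟨‖y‖, ?_⟩
  rintro - ⟨n, rfl⟩
  have h1 := qc_mem (eKJI n).2.1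
  have h2 := lp.norm_apply_le_norm ENNReal.top_ne_zero y (eKJI n).1
  simp only [Real.norm_eq_abs] at h2 ⊢
  rw [abs_mul, abs_of_nonneg h1.1]
  calc qc (eKJI n).2.1 * |y (eKJI n).1| ≤ 1 * ‖y‖ :=
        mul_le_mul h1.2 h2 (abs_nonneg _) zero_le_one
    _ = ‖y‖ := one_mul _

private def T : Linf →ₗ[ℝ] Linf where
  toFun y := ⟨fun n => qc (eKJI n).2.1 * y (eKJI n).1, Tmem y⟩
  map_add' x y := by
    ext n
    simp only [lp.coeFn_add, Pi.add_apply]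
    exact mul_add _ _ _
  map_smul' c y := by
    ext n
    simp only [lp.coeFn_smul, Pi.smul_apply, RingHom.id_apply, smul_eq_mul]
    ring

@[simp] private lemma T_apply (y : Linf) (n : ℕ) :
    (T y) n = qc (eKJI n).2.1 * y (eKJI n).1 := rfl

private lemma T_norm (y : Linf) : ‖T y‖ = ‖y‖ := by
  refine le_antisymm ?_ ?_
  · refine lp.norm_le_of_forall_le (norm_nonneg y) fun n => ?_
    have h1 := qc_mem (eKJI n).2.1
    have h2 := lp.norm_apply_le_norm ENNReal.top_ne_zero y (eKJI n).1
    simp only [Real.norm_eq_abs, T_apply] at h2 ⊢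
    rw [abs_mul, abs_of_nonneg h1.1]
    calc qc (eKJI n).2.1 * |y (eKJI n).1| ≤ 1 * ‖y‖ :=
          mul_le_mul h1.2 h2 (abs_nonneg _) zero_le_one
      _ = ‖y‖ := one_mul _
  · refine lp.norm_le_of_forall_le (norm_nonneg _) fun k => ?_
    obtain ⟨j1, hj1⟩ := qc_exists_one
    have h := lp.norm_apply_le_norm ENNReal.top_ne_zero (T y) (eKJI.symm (k, j1, 0))
    rwa [T_apply, eKJI.apply_symm_apply, hj1, one_mul] at h

private lemma T_isometry : Isometry T := AddMonoidHomClass.isometry_of_norm T T_norm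

private lemma limset_T {y : Linf} (hy : y ≠ 0) :
    ∃ a b : ℝ, a < b ∧ LimSet (T y) = Set.Icc a b := by
  set S : Set ℝ := Set.range (fun p : ℕ × ℕ => qc p.2 * y p.1) with hS
  set U : Set ℝ := ⋃ k, (fun c => c * y k) '' Set.Icc (0:ℝ) 1 with hU
  -- step 1
  have hstep1 : LimSet (T y) = closure S := by
    ext t
    constructor
    · intro ht
      rw [Metric.mem_closure_iff]
      intro ε hε
      obtain ⟨n, hn⟩ := (ht ε hε).nonempty
      refine ⟨qc (eKJI n).2.1 * y (eKJI n).1, ⟨((eKJI n).1, (eKJI n).2.1), rfl⟩, ?_⟩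
      rw [Real.dist_eq, abs_sub_comm]
      simpa using hn
    · intro ht ε hε
      rw [Metric.mem_closure_iff] at ht
      obtain ⟨s, ⟨⟨k, j⟩, rfl⟩, hs⟩ := ht ε hε
      refine Set.infinite_of_injective_forall_mem
        (f := fun i : ℕ => eKJI.symm (k, j, i)) ?_ ?_
      · intro a b hab
        have := eKJI.symm.injective hab
        simpa using this
      · intro i
        simp only [Set.mem_setOf_eq, T_apply, eKJI.apply_symm_apply]
        rw [Real.dist_eq] at hs
        rw [abs_sub_comm]
        exact hs
  -- S ⊆ U and U ⊆ closure S
  have hSU : S ⊆ U := by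
    rintro - ⟨⟨k, j⟩, rfl⟩
    exact Set.mem_iUnion.2 ⟨k, ⟨qc j, qc_mem j, rfl⟩⟩
  have hUS : U ⊆ closure S := by
    rintro u hu
    simp only [hU, Set.mem_iUnion, Set.mem_image] at hu
    obtain ⟨k, c, hc, rfl⟩ := hu
    rw [Metric.mem_closure_iff]
    intro ε hε
    obtain ⟨j, hj⟩ := qc_dense hc (show (0:ℝ) < ε / (|y k| + 1) by positivity)
    refine ⟨qc j * y k, ⟨(k, j), rfl⟩, ?_⟩
    rw [Real.dist_eq, ← sub_mul, abs_mul]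
    have h0 : (0:ℝ) ≤ |y k| := abs_nonneg _
    have hj' : |c - qc j| < ε / (|y k| + 1) := by rwa [abs_sub_comm]
    calc |c - qc j| * |y k| ≤ (ε / (|y k| + 1)) * |y k| :=
          mul_le_mul_of_nonneg_right hj'.le h0
      _ < ε := by
          rw [div_mul_eq_mul_div, div_lt_iff₀ (by positivity)]
          nlinarith
  have hclos : closure S = closure U :=
    Set.Subset.antisymm (closure_mono hSU) (closure_minimal hUS isClosed_closure)
  -- preconnected
  have hpre : IsPreconnected (closure S) := by
    rw [hclos]
    apply IsPreconnected.closure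
    have hUeq : U = ⋃₀ (Set.range fun k => (fun c => c * y k) '' Set.Icc (0:ℝ) 1) :=
      (Set.sUnion_range _).symm
    rw [hUeq]
    apply isPreconnected_sUnion (0:ℝ)
    · rintro s ⟨k, rfl⟩
      exact ⟨0, ⟨le_refl 0, zero_le_one⟩, zero_mul _⟩
    · rintro s ⟨k, rfl⟩
      exact isPreconnected_Icc.image _ (Continuous.continuousOn (by continuity))
  -- bounds
  have hcl : closure S ⊆ Set.Icc (-‖y‖) ‖y‖ := by
    refine closure_minimal ?_ isClosed_Icc
    rintro - ⟨⟨k, j⟩, rfl⟩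
    have h1 := qc_mem j
    have h2 := lp.norm_apply_le_norm ENNReal.top_ne_zero y k
    simp only [Real.norm_eq_abs] at h2
    have habs : |qc j * y k| ≤ ‖y‖ := by
      rw [abs_mul, abs_of_nonneg h1.1]
      calc qc j * |y k| ≤ 1 * ‖y‖ := mul_le_mul h1.2 h2 (abs_nonneg _) zero_le_one
        _ = ‖y‖ := one_mul _
    exact abs_le.1 habs
  have bddA : BddAbove (closure S) := ⟨‖y‖, fun s hs => (hcl hs).2⟩
  have bddB : BddBelow (closure S) := ⟨-‖y‖, fun s hs => (hcl hs).1⟩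
  have h0S : (0:ℝ) ∈ closure S :=
    hUS (Set.mem_iUnion.2 ⟨0, ⟨0, ⟨le_refl 0, zero_le_one⟩, zero_mul _⟩⟩)
  have hne : (closure S).Nonempty := ⟨0, h0S⟩
  set a := sInf (closure S) with hadef
  set b := sSup (closure S) with hbdef
  have ha : a ∈ closure S := IsClosed.csInf_mem isClosed_closure hne bddB
  have hb : b ∈ closure S := IsClosed.csSup_mem isClosed_closure hne bddA
  have hIcc : closure S = Set.Icc a b :=
    Set.Subset.antisymm (fun t ht => ⟨csInf_le bddB ht, le_csSup bddA ht⟩)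
      (hpre.ordConnected.out ha hb)
  -- nondegeneracy
  obtain ⟨k0, hk0⟩ : ∃ k, y k ≠ 0 := by
    by_contra h
    push_neg at h
    exact hy (lp.eq_zero_iff_coeFn_eq_zero.2 (funext h))
  obtain ⟨j1, hj1⟩ := qc_exists_one
  have hyk : y k0 ∈ closure S := subset_closure ⟨(k0, j1), by simp [hj1]⟩
  have h1 : a ≤ y k0 ∧ y k0 ≤ b := by
    have := hIcc ▸ hyk; exact ⟨this.1, this.2⟩
  have h2 : a ≤ 0 ∧ (0:ℝ) ≤ b := by
    have := hIcc ▸ h0S; exact ⟨this.1, this.2⟩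
  have hab : a < b := by
    rcases hk0.lt_or_gt with h | h
    · exact lt_of_le_of_lt h1.1 (lt_of_lt_of_le h h2.2)
    · exact lt_of_le_of_lt h2.1 (lt_of_lt_of_le h h1.2)
  exact ⟨a, b, hab, hstep1.trans hIcc⟩

/-- indicator sequences -/
private def ind (A : Set ℕ) : Linf :=
  ⟨Set.indicator A (fun _ => (1:ℝ)), memℓp_infty ⟨1, by
    rintro - ⟨n, rfl⟩
    by_cases h : n ∈ A <;> simp [Set.indicator_apply, h]⟩⟩

@[simp] private lemma ind_apply (A : Set ℕ) (n : ℕ) :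
    (ind A) n = Set.indicator A (fun _ => (1:ℝ)) n := rfl

private lemma ind_dist {A B : Set ℕ} (h : A ≠ B) : 1 ≤ dist (ind A) (ind B) := by
  obtain ⟨n, hn⟩ : ∃ n, ((n ∈ A ∧ n ∉ B) ∨ (n ∈ B ∧ n ∉ A)) := by
    by_contra hc
    push_neg at hc
    exact h (Set.ext fun n => ⟨(hc n).1, (hc n).2⟩)
  rw [dist_eq_norm]
  have h2 := lp.norm_apply_le_norm ENNReal.top_ne_zero (ind A - ind B) n
  rw [lp.coeFn_sub, Pi.sub_apply, Real.norm_eq_abs] at h2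
  refine le_trans ?_ h2
  rcases hn with ⟨h1, h2'⟩ | ⟨h1, h2'⟩ <;>
    simp [ind_apply, Set.indicator_apply, h1, h2']

end Stmt9Aux

/-- The set of bounded sequences whose set of cluster points is a nondegenerate
closed interval contains, up to zero, a closed subspace of `ℓ∞` of density continuum. -/
theorem stmt9 :
    ∃ V : Submodule ℝ (lp (fun _ : ℕ => ℝ) ∞),
      IsClosed (V : Set (lp (fun _ : ℕ => ℝ) ∞)) ∧
      (V : Set (lp (fun _ : ℕ => ℝ) ∞)) ⊆
        {x | ∃ a b : ℝ, a < b ∧ LimSet x = Set.Icc a b} ∪ {0} ∧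
      ∀ D : Set V, Dense D → Cardinal.continuum ≤ Cardinal.mk D := by
  classical
  refine ⟨LinearMap.range T, ?_, ?_, ?_⟩
  · have : (LinearMap.range T : Set Linf) = Set.range T := LinearMap.coe_range T
    rw [this]
    exact T_isometry.isClosedEmbedding.isClosed_range
  · rintro x ⟨y, rfl⟩
    by_cases hy : y = 0
    · right; simp [hy]
    · left; exact limset_T hy
  · intro D hD
    -- the separated family
    set F : Set ℕ → ↥(LinearMap.range T) := fun A => ⟨T (ind A), ⟨ind A, rfl⟩⟩ with hF
    have hFdist : ∀ {A B : Set ℕ}, A ≠ B → 1 ≤ dist (F A) (F B) := by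
      intro A B h
      have : dist (F A) (F B) = dist (T (ind A)) (T (ind B)) := rfl
      rw [this, T_isometry.dist_eq]
      exact ind_dist h
    have hch : ∀ A : Set ℕ, ∃ d : ↥(LinearMap.range T), d ∈ D ∧ dist (F A) d < 1/2 := by
      intro A
      have := hD (F A)
      rw [Metric.mem_closure_iff] at this
      obtain ⟨d, hd, hdd⟩ := this (1/2) (by norm_num)
      exact ⟨d, hd, hdd⟩
    choose f hfD hfdist using hch
    have hinj : Function.Injective (fun A : Set ℕ => (⟨f A, hfD A⟩ : D)) := by
      intro A B hAB
      by_contra hne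
      have hfe : f A = f B := congrArg Subtype.val hAB
      have : dist (F A) (F B) ≤ dist (F A) (f A) + dist (f B) (F B) := by
        rw [hfe]; exact dist_triangle _ _ _
      have h1 : dist (F A) (F B) < 1 := by
        have := hfdist A
        have h2 := hfdist B
        rw [dist_comm (f B) (F B)] at *
        linarith [this, h2, dist_triangle (F A) (f A) (F B), (dist_comm (f B) (F B))]
      exact absurd (hFdist hne) (not_le.2 h1)
    calc Cardinal.continuum = Cardinal.mk (Set ℕ) := by
          rw [Cardinal.mk_set, Cardinal.mk_nat, Cardinal.two_power_aleph0]
      _ ≤ Cardinal.mk D := Cardinal.mk_le_of_injective hinj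
end

section
/- Let K be a compact Hausdorff space and κ a cardinal. If there exists a linear isometry T : C(βℕ∖ℕ, ℝ) →ₗᵢ C(K, ℝ) such that for every g ≠ 0 the range of T g has cardinality κ (Cardinal.mk ↥(Set.range (T g)) = κ), then κ = Cardinal.continuum. -/
/-!
Extending a sequence that runs through the dyadic numbers of `[0, 1]` to `βℕ` gives
`g ∈ C(βℕ∖ℕ, ℝ)` that, for every `r ∈ [0, 1]`, is constantly `r` on a nonempty clopen set: the
nonprincipal ultrafilters containing the indices of the dyadic approximations of `r`.
If `f` is constantly `r` on a nonempty clopen `U`, a linear isometry `T` satisfies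
`T f x = ± r` wherever `|T χ_U|` attains its norm `1`. So `|T g|` takes every value in
`[0, 1]`, and the range of `T g` has the cardinality of the continuum.
-/

open scoped ENNReal

/-- The remainder `βℕ∖ℕ` of the Stone–Čech compactification of `ℕ`: the set of nonprincipal
ultrafilters on `ℕ`, as a subspace of `Ultrafilter ℕ`. -/
def betaNRemainder : Set (Ultrafilter ℕ) := (Set.range (pure : ℕ → Ultrafilter ℕ))ᶜ

lemma isOpen_range_pure : IsOpen (Set.range (pure : ℕ → Ultrafilter ℕ)) := by
  have h : Set.range (pure : ℕ → Ultrafilter ℕ)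
      = ⋃ n : ℕ, {u : Ultrafilter ℕ | ({n} : Set ℕ) ∈ u} := by
    ext u
    simp only [Set.mem_range, Set.mem_iUnion, Set.mem_setOf_eq]
    constructor
    · rintro ⟨n, rfl⟩
      exact ⟨n, by simp⟩
    · rintro ⟨n, hn⟩
      obtain ⟨x, hx, rfl⟩ := Ultrafilter.eq_pure_of_finite_mem (Set.finite_singleton n) hn
      exact ⟨x, rfl⟩
  rw [h]
  exact isOpen_iUnion fun n => ultrafilter_isOpen_basic _

instance : CompactSpace ↥betaNRemainder := by
  rw [← isCompact_iff_compactSpace]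
  exact isOpen_range_pure.isClosed_compl.isCompact

open Set Filter Topology

namespace ContinuousMap

variable {X : Type*} [TopologicalSpace X] [CompactSpace X]

lemma exists_abs_apply_eq_norm [Nonempty X] (g : C(X, ℝ)) : ∃ x, |g x| = ‖g‖ := by
  obtain ⟨x, -, hx⟩ := isCompact_univ.exists_isMaxOn univ_nonempty
    (continuous_abs.comp g.continuous).continuousOn
  refine ⟨x, le_antisymm (by simpa using g.norm_coe_le_norm x) ?_⟩
  exact (g.norm_le (abs_nonneg _)).mpr fun y => hx (mem_univ y)

lemma norm_charFn {U : Set X} (hU : IsClopen U) (hne : U.Nonempty) :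
    ‖(LocallyConstant.charFn ℝ hU).toContinuousMap‖ = 1 := by
  refine le_antisymm ((norm_le _ zero_le_one).mpr fun x => ?_) ?_
  · by_cases hx : x ∈ U <;> simp [LocallyConstant.coe_charFn, hx]
  · obtain ⟨x, hx⟩ := hne
    simpa [LocallyConstant.coe_charFn, hx] using
      (LocallyConstant.charFn ℝ hU).toContinuousMap.norm_coe_le_norm x

lemma norm_add_smul_charFn_le {U : Set X} (hU : IsClopen U) {f : C(X, ℝ)} {r t : ℝ}
    (hf : EqOn f (fun _ => r) U) (ht : |t| ≤ ‖f‖) :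
    ‖f + (t - r) • (LocallyConstant.charFn ℝ hU).toContinuousMap‖ ≤ ‖f‖ := by
  refine (norm_le _ (norm_nonneg f)).mpr fun x => ?_
  by_cases hx : x ∈ U
  · simpa [LocallyConstant.coe_charFn, hx, hf hx] using ht
  · simpa [LocallyConstant.coe_charFn, hx] using f.norm_coe_le_norm x

end ContinuousMap

/-- The sup-norm of `f + (t - r) χ_U` stays `≤ ‖f‖` for `|t| ≤ ‖f‖`; evaluating at a point where
`|T χ_U|` peaks, for `t = ±‖f‖`, squeezes `T f` there to `± r`. -/
theorem LinearIsometry.exists_abs_apply_eq_of_eqOn_isClopen {X K : Type*} [TopologicalSpace X]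
    [CompactSpace X] [TopologicalSpace K] [CompactSpace K] (T : C(X, ℝ) →ₗᵢ[ℝ] C(K, ℝ))
    {U : Set X} (hU : IsClopen U) (hne : U.Nonempty) {f : C(X, ℝ)} {r : ℝ}
    (hf : EqOn f (fun _ => r) U) : ∃ x, |T f x| = |r| := by
  set χ := (LocallyConstant.charFn ℝ hU).toContinuousMap
  have hTχ : ‖T χ‖ = 1 := by rw [T.norm_map, ContinuousMap.norm_charFn hU hne]
  have : Nonempty K := by
    by_contra hK
    rw [not_nonempty_iff] at hK
    simp [Subsingleton.elim (T χ) 0] at hTχ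
  obtain ⟨x, hx⟩ := (T χ).exists_abs_apply_eq_norm
  rw [hTχ] at hx
  have heval : ∀ t, |t| ≤ ‖f‖ → |T f x + (t - r) * T χ x| ≤ ‖f‖ := fun t ht =>
    calc |T f x + (t - r) * T χ x| = ‖T (f + (t - r) • χ) x‖ := by simp
      _ ≤ ‖T (f + (t - r) • χ)‖ := ContinuousMap.norm_coe_le_norm _ _
      _ = ‖f + (t - r) • χ‖ := T.norm_map _
      _ ≤ ‖f‖ := ContinuousMap.norm_add_smul_charFn_le hU hf ht
  have h₁ := abs_le.mp (heval ‖f‖ (abs_norm f).le)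
  have h₂ := abs_le.mp (heval (-‖f‖) (by rw [abs_neg, abs_norm]))
  refine ⟨x, ?_⟩
  rcases (abs_eq zero_le_one).mp hx with hs | hs <;> rw [hs] at h₁ h₂
  · rw [show T f x = r by linarith]
  · rw [show T f x = -r by linarith, abs_neg]

lemma Ultrafilter.tendsto_of_le_cofinite_of_range_mem {α β γ : Type*} {f : α → β} (hf : Function.Injective f)
    {q : β → γ} {l : Filter γ} (hq : Tendsto (q ∘ f) cofinite l) {u : Ultrafilter β}
    (hu : (u : Filter β) ≤ cofinite) (hfu : range f ∈ u) : Tendsto q u l := by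
  have hle : (u : Filter β) ≤ Filter.map f cofinite := by
    rw [← hf.comap_cofinite_eq, map_comap]
    exact le_inf hu (le_principal_iff.mpr hfu)
  exact (tendsto_map'_iff.mpr hq).mono_left hle

lemma mem_betaNRemainder_iff {u : Ultrafilter ℕ} :
    u ∈ betaNRemainder ↔ (u : Filter ℕ) ≤ cofinite := by
  refine ⟨fun hu => u.le_cofinite_or_eq_pure.resolve_right ?_, ?_⟩
  · rintro ⟨a, rfl⟩
    exact hu ⟨a, rfl⟩
  · rintro hu ⟨a, rfl⟩
    simpa using hu (Set.finite_singleton a).compl_mem_cofinite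

/-- `n = Nat.pair k m` encodes the dyadic number `m / 2 ^ k`, clamped to `[0, 1]`. -/
noncomputable def dyadicSeq (n : ℕ) : Icc (0 : ℝ) 1 :=
  projIcc 0 1 zero_le_one ((n.unpair.2 : ℝ) / 2 ^ n.unpair.1)

noncomputable def dyadicIndex (r : ℝ) (k : ℕ) : ℕ := Nat.pair k ⌊r * 2 ^ k⌋₊

lemma dyadicIndex_injective (r : ℝ) : Function.Injective (dyadicIndex r) := fun a b hab => by
  simpa [dyadicIndex, Nat.unpair_pair] using congrArg (fun n => n.unpair.1) hab

lemma tendsto_dyadicSeq_comp_dyadicIndex {r : ℝ} (hr : 0 ≤ r) :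
    Tendsto (dyadicSeq ∘ dyadicIndex r) cofinite (𝓝 (projIcc 0 1 zero_le_one r)) := by
  rw [Nat.cofinite_eq_atTop]
  have hfloor := (tendsto_nat_floor_mul_div_atTop hr).comp
    (tendsto_pow_atTop_atTop_of_one_lt (one_lt_two (α := ℝ)))
  simpa [Function.comp_def, dyadicSeq, dyadicIndex, Nat.unpair_pair] using
    continuous_projIcc.continuousAt.tendsto.comp hfloor

lemma exists_continuousMap_betaNRemainder_eqOn_isClopen :
    ∃ g : C(↥betaNRemainder, ℝ), ∀ r ∈ Icc (0 : ℝ) 1,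
      ∃ U : Set ↥betaNRemainder, IsClopen U ∧ U.Nonempty ∧ EqOn g (fun _ => r) U := by
  refine ⟨⟨fun u => (Ultrafilter.extend dyadicSeq u.1 : Icc (0 : ℝ) 1),
    (continuous_subtype_val.comp (continuous_ultrafilter_extend _)).comp continuous_subtype_val⟩,
    fun r hr => ?_⟩
  refine ⟨{u | range (dyadicIndex r) ∈ u.1}, ?_, ?_, fun u hu => ?_⟩
  · exact ⟨(ultrafilter_isClosed_basic _).preimage continuous_subtype_val,
      (ultrafilter_isOpen_basic _).preimage continuous_subtype_val⟩
  · have := (infinite_range_of_injective (dyadicIndex_injective r)).cofinite_inf_principal_neBot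
    obtain ⟨u, hu⟩ := Ultrafilter.exists_le (cofinite ⊓ 𝓟 (range (dyadicIndex r)))
    exact ⟨⟨u, mem_betaNRemainder_iff.mpr (hu.trans inf_le_left)⟩,
      le_principal_iff.mp (hu.trans inf_le_right)⟩
  · have hlim := Ultrafilter.tendsto_of_le_cofinite_of_range_mem (dyadicIndex_injective r)
      (tendsto_dyadicSeq_comp_dyadicIndex hr.1) (mem_betaNRemainder_iff.mp u.2) hu
    simp [ultrafilter_extend_eq_iff.mpr hlim, projIcc_of_mem _ hr]

theorem stmt12_general {K : Type*} [TopologicalSpace K] [CompactSpace K] (κ : Cardinal)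
    (h : ∃ T : C(↥betaNRemainder, ℝ) →ₗᵢ[ℝ] C(K, ℝ),
      ∀ g : C(↥betaNRemainder, ℝ), g ≠ 0 →
        Cardinal.mk ↥(Set.range (T g)) = κ) :
    κ = Cardinal.continuum := by
  obtain ⟨T, hT⟩ := h
  obtain ⟨g, hg⟩ := exists_continuousMap_betaNRemainder_eqOn_isClopen
  have habs : Icc (0 : ℝ) 1 ⊆ abs '' range (T g) := fun r hr => by
    obtain ⟨U, hU, hne, hgU⟩ := hg r hr
    obtain ⟨x, hx⟩ := T.exists_abs_apply_eq_of_eqOn_isClopen hU hne hgU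
    exact ⟨T g x, mem_range_self x, hx.trans (abs_of_nonneg hr.1)⟩
  have hg0 : g ≠ 0 := by
    rintro rfl
    obtain ⟨_, ⟨x, rfl⟩, hx⟩ := habs (right_mem_Icc.mpr zero_le_one)
    simp at hx
  rw [← hT g hg0]
  refine le_antisymm ((Cardinal.mk_set_le _).trans_eq Cardinal.mk_real) ?_
  calc Cardinal.continuum = Cardinal.mk (Icc (0 : ℝ) 1) := (Cardinal.mk_Icc_real zero_lt_one).symm
    _ ≤ Cardinal.mk (abs '' range (T g)) := Cardinal.mk_le_mk_of_subset habs
    _ ≤ Cardinal.mk (range (T g)) := Cardinal.mk_image_le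

/-- If `K` is a compact Hausdorff space and there is a linear isometry
`T : C(βℕ∖ℕ, ℝ) →ₗᵢ C(K, ℝ)` such that the range of `T g` has cardinality `κ` for every
`g ≠ 0`, then `κ` is the continuum. -/
theorem stmt12 {K : Type*} [TopologicalSpace K] [CompactSpace K] [T2Space K] (κ : Cardinal)
    (h : ∃ T : C(↥betaNRemainder, ℝ) →ₗᵢ[ℝ] C(K, ℝ),
      ∀ g : C(↥betaNRemainder, ℝ), g ≠ 0 →
        Cardinal.mk ↥(Set.range (T g)) = κ) :
    κ = Cardinal.continuum :=
  stmt12_general κ h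
end

section
/- Let K be a compact Hausdorff space and U : ℕ → Set K a family of pairwise disjoint clopen subsets of K. Let g_n be a sequence in C(K, ℝ) converging (in the supremum norm) to g ∈ C(K, ℝ), and assume: (a) each g_n is constant on each U i; (b) for every n, the set of indices i such that g_n is not identically 0 on U i is finite; (c) each g_n vanishes on K ∖ ⋃ i, U i. Then: (i) g is constant on each U i; (ii) the constant values of g on the U i tend to 0, i.e. for every ε > 0 the set {i | ∃ y ∈ U i, ε ≤ |g y|} is finite; and (iii) g vanishes on K ∖ ⋃ i, U i. -/
/-- Let `K` be compact Hausdorff and `U : ℕ → Set K` pairwise disjoint clopen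
sets. If `g n → g₀` in `C(K, ℝ)` where each `g n` is constant on each `U i`, vanishes on all
but finitely many of the `U i`, and vanishes off `⋃ i, U i`, then `g₀` is constant on each
`U i`, its constant values tend to `0`, and `g₀` vanishes off `⋃ i, U i`. -/
theorem stmt16 {K : Type*} [TopologicalSpace K] [CompactSpace K] [T2Space K]
    (U : ℕ → Set K) (hclopen : ∀ i, IsClopen (U i))
    (hdisj : ∀ i j, i ≠ j → Disjoint (U i) (U j))
    (g : ℕ → C(K, ℝ)) (g₀ : C(K, ℝ))
    (hconv : Filter.Tendsto g Filter.atTop (nhds g₀))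
    (ha : ∀ n i, ∃ c : ℝ, ∀ y ∈ U i, g n y = c)
    (hb : ∀ n, {i : ℕ | ∃ y ∈ U i, g n y ≠ 0}.Finite)
    (hc : ∀ n, ∀ y ∉ ⋃ i, U i, g n y = 0) :
    (∀ i, ∃ c : ℝ, ∀ y ∈ U i, g₀ y = c) ∧
    (∀ ε > (0 : ℝ), {i : ℕ | ∃ y ∈ U i, ε ≤ |g₀ y|}.Finite) ∧
    (∀ y ∉ ⋃ i, U i, g₀ y = 0) := by
  have hpt : ∀ y : K, Filter.Tendsto (fun n => g n y) Filter.atTop (nhds (g₀ y)) := by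
    intro y
    exact ((continuous_eval_const y).tendsto g₀).comp hconv
  refine ⟨?_, ?_, ?_⟩
  · intro i
    by_cases h : (U i).Nonempty
    · obtain ⟨y₀, hy₀⟩ := h
      refine ⟨g₀ y₀, fun y hy => ?_⟩
      have : ∀ n, g n y = g n y₀ := fun n => by
        obtain ⟨c, hcc⟩ := ha n i
        rw [hcc y hy, hcc y₀ hy₀]
      exact tendsto_nhds_unique (hpt y)
        ((hpt y₀).congr (fun n => (this n).symm))
    · exact ⟨0, fun y hy => absurd ⟨y, hy⟩ h⟩
  · intro ε hε
    obtain ⟨n, hn⟩ := (Metric.tendsto_atTop.mp hconv (ε / 2) (by linarith)) |>.imp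
      (fun n h => h n le_rfl)
    refine ((hb n).subset ?_)
    intro i hi
    obtain ⟨y, hy, hεy⟩ := hi
    refine ⟨y, hy, fun h0 => ?_⟩
    have hd : dist (g n y) (g₀ y) ≤ dist (g n) g₀ :=
      ContinuousMap.dist_apply_le_dist y
    have : |g₀ y| ≤ ε / 2 := by
      have h2 := hd.trans hn.le
      rw [h0] at h2
      simpa [Real.dist_eq, abs_sub_comm] using h2
    linarith
  · intro y hy
    have : ∀ n, g n y = 0 := fun n => hc n y hy
    exact tendsto_nhds_unique (hpt y) (by simpa [this] using tendsto_const_nhds)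
end
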